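/- arXiv:1105.5933 — 8 statements merged into one kernel-verified Lean document; each statement's English description precedes it below -/
import Mathlib

section
/- There exists n₀ such that for every integer n ≥ n₀ and every prime Δ with n⁴/2 ≤ Δ ≤ n⁴, there exists a set V of n² distinct {0,1}-vectors in (ZMod Δ)ⁿ such that for every integer k with √n ≤ k ≤ n and every subset W ⊆ V with |W| ≤ k/(22·log₂ k), the family of restrictions of the vectors of W to their last k coordinates is linearly independent over ZMod Δ (as vectors in (ZMod Δ)ᵏ). -/
/-!
Put `L = ⌈log₂ Δ⌉` and `x_t = n² + t`. The vector attached to `a < n²` carries, in consecutive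
blocks of `L` coordinates counted from the end, the binary digits of `1 / (x_t - a)` in `ZMod Δ`.
The last `k` coordinates contain `⌊k / L⌋` whole blocks, and reassembling the digits of each block
with weights `2ʲ` is a linear map sending the restricted vectors to the columns
`(1 / (x_t - a))_{t < ⌊k / L⌋}` of a Cauchy matrix, which are independent as soon as there are at
most `⌊k / L⌋` of them. Since `L ≤ 9 log₂ k`, this is guaranteed by `|W| ≤ k / (22 log₂ k)`.
-/

/-- The restriction of a vector `v ∈ (ZMod Δ)ⁿ` to its last `k` coordinates
(coordinates `n-k, …, n-1`). -/
def lastCoords {α : Type*} (n k : ℕ) (hk : k ≤ n) (v : Fin n → α) : Fin k → α :=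
  fun i => v ⟨n - k + i.1, by omega⟩

open Polynomial Finset

theorem linearIndependent_inv_sub {F ι τ : Type*} [Field F] [Fintype ι] [Fintype τ]
    {a : ι → F} (ha : Function.Injective a) {x : τ → F} (hx : Function.Injective x)
    (hxa : ∀ t i, x t ≠ a i) (hcard : Fintype.card ι ≤ Fintype.card τ) :
    LinearIndependent F (fun i t => (x t - a i)⁻¹) := by
  classical
  rw [Fintype.linearIndependent_iff]
  intro g hg i₀
  -- Clearing denominators, `∑ gᵢ / (X - aᵢ)` becomes a polynomial of degree `< card ι`
  -- vanishing at every `x t`.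
  set P : F[X] := ∑ i, C (g i) * Lagrange.nodal (univ.erase i) a
  have hP : P = 0 := by
    refine eq_zero_of_natDegree_lt_card_of_eval_eq_zero P hx (fun t => ?_) ?_
    · have hsum : ∑ i, g i * (x t - a i)⁻¹ = 0 := by simpa using congrFun hg t
      have hnodal : ∀ i, eval (x t) (Lagrange.nodal (univ.erase i) a)
          = (x t - a i)⁻¹ * eval (x t) (Lagrange.nodal univ a) := fun i => by
        rw [Lagrange.nodal_eq_mul_nodal_erase (mem_univ i), eval_mul, eval_sub, eval_X, eval_C,
          inv_mul_cancel_left₀]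
        simpa [sub_eq_zero] using hxa t i
      simp only [P, eval_finsetSum, eval_mul, eval_C, hnodal, ← mul_assoc, ← sum_mul, hsum,
        zero_mul]
    · have hι : 0 < Fintype.card ι := Fintype.card_pos_iff.mpr ⟨i₀⟩
      refine (natDegree_sum_le_of_forall_le _ _ (n := Fintype.card ι - 1) fun i _ => ?_).trans_lt
        (by omega)
      refine (natDegree_C_mul_le _ _).trans ?_
      rw [Lagrange.natDegree_nodal, card_erase_of_mem (mem_univ i), card_univ]
  have h := congrArg (eval (a i₀)) hP
  rw [eval_finsetSum, sum_eq_single i₀ (fun i _ hi => by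
    rw [eval_mul, Lagrange.eval_nodal_at_node (mem_erase.mpr ⟨Ne.symm hi, mem_univ i₀⟩),
      mul_zero]) (by simp), eval_mul, eval_C, eval_zero] at h
  exact (mul_eq_zero.mp h).resolve_right <| Lagrange.eval_nodal_not_at_node fun j hj =>
    fun hij => (mem_erase.mp hj).1 (ha hij).symm

theorem sum_div_two_pow_mod_two_mul_two_pow {L v : ℕ} (hv : v < 2 ^ L) :
    ∑ j : Fin L, v / 2 ^ (j : ℕ) % 2 * 2 ^ (j : ℕ) = v := by
  have h := congrArg Fin.val (finFunctionFinEquiv.apply_symm_apply (⟨v, hv⟩ : Fin (2 ^ L)))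
  rwa [finFunctionFinEquiv_apply] at h

def binaryDigit {Δ : ℕ} (z : ZMod Δ) (j : ℕ) : ZMod Δ := ((z.val / 2 ^ j % 2 : ℕ) : ZMod Δ)

theorem binaryDigit_eq_zero_or_one {Δ : ℕ} (z : ZMod Δ) (j : ℕ) :
    binaryDigit z j = 0 ∨ binaryDigit z j = 1 := by
  rcases Nat.mod_two_eq_zero_or_one (z.val / 2 ^ j) with h | h <;> simp [binaryDigit, h]

theorem sum_two_pow_mul_binaryDigit {Δ L : ℕ} [NeZero Δ] (hΔ : Δ ≤ 2 ^ L) (z : ZMod Δ) :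
    ∑ j : Fin L, (2 : ZMod Δ) ^ (j : ℕ) * binaryDigit z j = z := by
  have h := congrArg (Nat.cast : ℕ → ZMod Δ)
    (sum_div_two_pow_mod_two_mul_two_pow ((ZMod.val_lt z).trans_le hΔ))
  push_cast at h
  simpa [binaryDigit, mul_comm] using h

-- Block `t` of `L` coordinates, counted from the last coordinate, holds the binary digits of `y t`,
-- least significant first.
def blockDigits {Δ : ℕ} (L : ℕ) (y : ℕ → ZMod Δ) (n : ℕ) : Fin n → ZMod Δ :=
  fun i => binaryDigit (y (i.rev / L)) (i.rev % L)

def blockIndex {L k : ℕ} (t : Fin (k / L)) (j : Fin L) : Fin k :=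
  ⟨t * L + j, calc (t : ℕ) * L + j < (t + 1) * L := by rw [add_one_mul]; omega
    _ ≤ k / L * L := Nat.mul_le_mul_right L t.2
    _ ≤ k := Nat.div_mul_le_self k L⟩

def decodeBlocks (R : Type*) [CommSemiring R] (L k : ℕ) : (Fin k → R) →ₗ[R] Fin (k / L) → R :=
  LinearMap.pi fun t => ∑ j : Fin L, (2 : R) ^ (j : ℕ) • LinearMap.proj (blockIndex t j).rev

theorem lastCoords_blockDigits {Δ : ℕ} (L : ℕ) (y : ℕ → ZMod Δ) {n k : ℕ} (hk : k ≤ n) :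
    lastCoords n k hk (blockDigits L y n) = blockDigits L y k := by
  ext i
  have h : n - (n - k + i + 1) = k - (i + 1) := by omega
  simp [lastCoords, blockDigits, Fin.rev, h]

theorem decodeBlocks_blockDigits {Δ L : ℕ} [NeZero Δ] (hΔ : Δ ≤ 2 ^ L) (y : ℕ → ZMod Δ)
    (k : ℕ) (t : Fin (k / L)) : decodeBlocks (ZMod Δ) L k (blockDigits L y k) t = y t := by
  have hL : 0 < L := (Nat.div_pos_iff.mp t.pos).1
  have hdiv (j : Fin L) : ((t : ℕ) * L + j) / L = t := by
    rw [Nat.add_comm, Nat.add_mul_div_right _ _ hL, Nat.div_eq_of_lt j.2, zero_add]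
  have hmod (j : Fin L) : ((t : ℕ) * L + j) % L = j := by
    rw [Nat.mul_add_mod_self_right, Nat.mod_eq_of_lt j.2]
  simp [decodeBlocks, blockDigits, blockIndex, hdiv, hmod, sum_two_pow_mul_binaryDigit hΔ]

theorem ZMod.natCast_eq_natCast_iff_of_lt {Δ a b : ℕ} (ha : a < Δ) (hb : b < Δ) :
    (a : ZMod Δ) = b ↔ a = b := by
  rw [ZMod.natCast_eq_natCast_iff', Nat.mod_eq_of_lt ha, Nat.mod_eq_of_lt hb]

def codeVec (n L Δ a : ℕ) : Fin n → ZMod Δ :=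
  blockDigits L (fun t => (((n ^ 2 + t : ℕ) : ZMod Δ) - (a : ZMod Δ))⁻¹) n

section codeVec

variable {n L Δ : ℕ} [Fact Δ.Prime]

theorem codeVec_injOn (hΔL : Δ ≤ 2 ^ L) (hL : 0 < L) (hLn : L ≤ n) (hnΔ : n ^ 2 < Δ) :
    Set.InjOn (codeVec n L Δ) (range (n ^ 2)) := by
  intro a ha b hb hab
  have h0 := congrArg (fun u => decodeBlocks (ZMod Δ) L n u ⟨0, Nat.div_pos hLn hL⟩) hab
  simp only [codeVec, decodeBlocks_blockDigits hΔL] at h0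
  rw [coe_range, Set.mem_Iio] at ha hb
  exact (ZMod.natCast_eq_natCast_iff_of_lt (by omega) (by omega)).mp
    (sub_right_injective (inv_injective h0))

theorem linearIndependent_lastCoords_codeVec {ι : Type*} [Fintype ι] (hΔL : Δ ≤ 2 ^ L)
    (hnΔ : n ^ 2 + n < Δ) {k : ℕ} (hk : k ≤ n) {a : ι → ℕ} (ha : Function.Injective a)
    (han : ∀ i, a i < n ^ 2) (hcard : Fintype.card ι ≤ k / L) :
    LinearIndependent (ZMod Δ) (fun i => lastCoords n k hk (codeVec n L Δ (a i))) := by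
  refine LinearIndependent.of_comp (decodeBlocks (ZMod Δ) L k) ?_
  have hdecode : decodeBlocks (ZMod Δ) L k ∘ (fun i => lastCoords n k hk (codeVec n L Δ (a i))) =
      fun i (t : Fin (k / L)) => (((n ^ 2 + t : ℕ) : ZMod Δ) - (a i : ℕ))⁻¹ := by
    funext i t
    simp only [Function.comp_apply, codeVec, lastCoords_blockDigits, decodeBlocks_blockDigits hΔL]
  have ht (t : Fin (k / L)) : (t : ℕ) < n := t.2.trans_le ((Nat.div_le_self k L).trans hk)
  rw [hdecode]
  refine linearIndependent_inv_sub (fun i j h => ha ?_) (fun t t' h => Fin.ext ?_)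
    (fun t i h => ?_) (by simpa using hcard)
  · have := han i; have := han j
    exact (ZMod.natCast_eq_natCast_iff_of_lt (by omega) (by omega)).mp h
  · have := ht t; have := ht t'
    have := (ZMod.natCast_eq_natCast_iff_of_lt (by omega) (by omega)).mp h
    omega
  · have := ht t; have := han i
    have := (ZMod.natCast_eq_natCast_iff_of_lt (by omega) (by omega)).mp h
    omega

end codeVec

theorem pow_four_le_two_pow {n : ℕ} (hn : 16 ≤ n) : n ^ 4 ≤ 2 ^ n := by
  induction n, hn using Nat.le_induction with
  | base => norm_num
  | succ n hn ih =>
    calc (n + 1) ^ 4 ≤ 2 * n ^ 4 := by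
          have h := Nat.pow_le_pow_left (by omega : 16 * (n + 1) ≤ 17 * n) 4
          rw [mul_pow, mul_pow] at h
          omega
      _ ≤ 2 ^ (n + 1) := by rw [pow_succ' 2 n]; exact Nat.mul_le_mul_left 2 ih

theorem sq_add_lt_of_pow_four_div_two_le {n Δ : ℕ} (hn : 2 ≤ n) (hΔ : (n : ℝ) ^ 4 / 2 ≤ Δ) :
    n ^ 2 + n < Δ := by
  have h2 : (2 : ℝ) ≤ n := by exact_mod_cast hn
  have h1 : 2 * (n : ℝ) ≤ n ^ 2 := by nlinarith
  have h3 : 4 * (n : ℝ) ^ 2 ≤ n ^ 4 := by nlinarith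
  have : (n : ℝ) ^ 2 + n < n ^ 4 / 2 := by nlinarith
  exact_mod_cast this.trans_le hΔ

open Real in
theorem mul_clog_two_le {c m n k : ℕ} (hn : 4 ≤ n) (hm : (m : ℝ) ≤ n ^ 4) (hnk : √n ≤ k)
    (hc : (c : ℝ) ≤ k / (22 * logb 2 k)) : c * Nat.clog 2 m ≤ k := by
  have hk : (2 : ℝ) ≤ k := calc
    (2 : ℝ) = √(2 ^ 2) := (sqrt_sq zero_le_two).symm
    _ ≤ √n := sqrt_le_sqrt (by exact_mod_cast hn)
    _ ≤ k := hnk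
  have hlogk : 1 ≤ logb 2 k := by
    rwa [le_logb_iff_rpow_le one_lt_two (by linarith), rpow_one]
  have hclog : (Nat.clog 2 m : ℝ) ≤ 9 * logb 2 k := by
    rcases Nat.eq_zero_or_pos m with rfl | hm0
    · simp only [Nat.clog_zero_right, Nat.cast_zero]; linarith
    have hceil : (Nat.clog 2 m : ℝ) < logb 2 m + 1 := by
      rw [← natCeil_logb_natCast, Nat.cast_ofNat]
      exact Nat.ceil_lt_add_one (logb_nonneg one_lt_two (by exact_mod_cast hm0))
    have hmk : logb 2 m ≤ 8 * logb 2 k := calc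
      logb 2 m ≤ logb 2 ((k ^ 2) ^ 4) := logb_le_logb_of_le one_lt_two (by exact_mod_cast hm0)
        (hm.trans (by gcongr; exact (sqrt_le_left (by linarith)).mp hnk))
      _ = 8 * logb 2 k := by rw [← pow_mul, logb_pow]; norm_num
    linarith
  have : (c : ℝ) * Nat.clog 2 m ≤ k := calc
    (c : ℝ) * Nat.clog 2 m ≤ k / (22 * logb 2 k) * (9 * logb 2 k) :=
      mul_le_mul hc hclog (by positivity) (by positivity)
    _ ≤ k := by field_simp; linarith
  exact_mod_cast this

theorem stmt0 :
    ∃ n₀ : ℕ, ∀ n : ℕ, n₀ ≤ n → ∀ Δ : ℕ, Δ.Prime →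
      (n : ℝ)^4 / 2 ≤ (Δ : ℝ) → (Δ : ℝ) ≤ (n : ℝ)^4 →
      ∃ V : Finset (Fin n → ZMod Δ),
        V.card = n^2 ∧
        (∀ v ∈ V, ∀ i, v i = 0 ∨ v i = 1) ∧
        (∀ k : ℕ, Real.sqrt n ≤ (k : ℝ) → ∀ hk : k ≤ n,
          ∀ W ⊆ V, (W.card : ℝ) ≤ (k : ℝ) / (22 * Real.logb 2 k) →
            LinearIndependent (ZMod Δ) (fun w : W => lastCoords n k hk w.1)) := by
  refine ⟨16, fun n hn Δ hΔ hΔlo hΔhi => ?_⟩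
  have := Fact.mk hΔ
  set L := Nat.clog 2 Δ
  have hΔL : Δ ≤ 2 ^ L := Nat.le_pow_clog one_lt_two Δ
  have hL : 0 < L := Nat.clog_pos one_lt_two hΔ.one_lt
  have hLn : L ≤ n := Nat.clog_le_of_le_pow <|
    (by exact_mod_cast hΔhi : Δ ≤ n ^ 4).trans (pow_four_le_two_pow hn)
  have hnΔ : n ^ 2 + n < Δ := sq_add_lt_of_pow_four_div_two_le (by omega) hΔlo
  have hinj := codeVec_injOn hΔL hL hLn (by omega)
  refine ⟨(range (n ^ 2)).image (codeVec n L Δ), by rw [card_image_of_injOn hinj, card_range],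
    fun v hv i => ?_, fun k hnk hk W hWV hW => ?_⟩
  · obtain ⟨a, -, rfl⟩ := mem_image.mp hv
    exact binaryDigit_eq_zero_or_one _ _
  choose a ha hav using fun w : W => mem_image.mp (hWV w.2)
  have hWL : W.card ≤ k / L :=
    (Nat.le_div_iff_mul_le hL).mpr (mul_clog_two_le (by omega) hΔhi hnk hW)
  simpa only [hav] using linearIndependent_lastCoords_codeVec hΔL hnΔ hk
    (fun w w' h => Subtype.ext <| by rw [← hav w, ← hav w', h]) (fun w => mem_range.mp (ha w))
    (by simpa using hWL)
end

section
/- For all natural numbers t, c, s with t ≤ c ≤ s and s ≥ 1, one has C(s−t, c−t) · sᵗ ≥ C(s, c) · (c−t+1)ᵗ, where C(·,·) denotes the binomial coefficient. -/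
/-! Write `c = k + t` and induct on `t` for all `k` at once, applying the hypothesis at `k + 1`
(which only costs `(k + 1) ^ t ≤ (k + 2) ^ t`). The step is then the absorption identity
`C(n, k + 1) (k + 1) = n C(n - 1, k)` for `n = s - t`, followed by `s - t ≤ s`. -/

namespace Nat

theorem choose_succ_mul_succ_eq_mul_choose_sub_one (n k : ℕ) :
    n.choose (k + 1) * (k + 1) = n * (n - 1).choose k := by
  cases n with
  | zero => simp
  | succ n => rw [add_tsub_cancel_right, add_one_mul_choose_eq]

theorem choose_add_mul_succ_pow_le (s t k : ℕ) :
    s.choose (k + t) * (k + 1) ^ t ≤ (s - t).choose k * s ^ t := by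
  induction t generalizing k with
  | zero => simp
  | succ t ih =>
    calc s.choose (k + (t + 1)) * (k + 1) ^ (t + 1)
        = s.choose (k + 1 + t) * (k + 1) ^ t * (k + 1) := by
          rw [pow_succ, ← add_assoc, add_right_comm, mul_assoc]
      _ ≤ s.choose (k + 1 + t) * (k + 1 + 1) ^ t * (k + 1) := by
          gcongr; exact le_succ _
      _ ≤ (s - t).choose (k + 1) * s ^ t * (k + 1) := Nat.mul_le_mul_right _ (ih (k + 1))
      _ = (s - t) * (s - (t + 1)).choose k * s ^ t := by
          rw [mul_right_comm, choose_succ_mul_succ_eq_mul_choose_sub_one, Nat.sub_sub]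
      _ ≤ s * (s - (t + 1)).choose k * s ^ t := by gcongr; exact sub_le _ _
      _ = (s - (t + 1)).choose k * s ^ (t + 1) := by ring

end Nat

theorem stmt4_general (t c s : ℕ) (htc : t ≤ c) :
    Nat.choose s c * (c - t + 1) ^ t ≤ Nat.choose (s - t) (c - t) * s ^ t := by
  obtain ⟨k, rfl⟩ := Nat.exists_eq_add_of_le' htc
  simpa using Nat.choose_add_mul_succ_pow_le s t k

theorem stmt4 (t c s : ℕ) (htc : t ≤ c) (hcs : c ≤ s) (hs : 1 ≤ s) :
    Nat.choose s c * (c - t + 1) ^ t ≤ Nat.choose (s - t) (c - t) * s ^ t :=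
  stmt4_general t c s htc
end

section
/- Let S be a finite set of size s ≥ 1, let Q be a finite set, let P : Q → (finite subsets of S) be a function with |P(q)| ≤ t for every q ∈ Q, and let c be an integer with t ≤ c ≤ s. Then there exists a subset C ⊆ S with |C| = c such that the number of q ∈ Q with P(q) ⊆ C is at least |Q| · ((c − t + 1)/s)ᵗ (as a real number). -/
open Finset

/-- Counting lemma: the number of `c`-subsets of `S` containing a fixed `A ⊆ S`
is `(|S| - |A|).choose (c - |A|)`. -/
lemma count_supersets {α : Type*} [DecidableEq α] (S A : Finset α) (c : ℕ)
    (hA : A ⊆ S) (hk : A.card ≤ c) :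
    ((S.powersetCard c).filter (fun C => A ⊆ C)).card
      = (S.card - A.card).choose (c - A.card) := by
  rw [← Finset.card_sdiff_of_subset hA, ← Finset.card_powersetCard (c - A.card) (S \ A)]
  apply Finset.card_bij' (fun C _ => C \ A) (fun D _ => D ∪ A)
  · intro C hC
    simp only [mem_filter, mem_powersetCard] at hC
    obtain ⟨⟨hCS, hCc⟩, hAC⟩ := hC
    rw [mem_powersetCard]
    refine ⟨sdiff_subset_sdiff hCS (le_refl A), ?_⟩
    rw [card_sdiff_of_subset hAC, hCc]
  · intro D hD
    rw [mem_powersetCard] at hD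
    obtain ⟨hDS, hDc⟩ := hD
    have hdisj : Disjoint D A := (sdiff_disjoint.mono_left hDS)
    simp only [mem_filter, mem_powersetCard]
    refine ⟨⟨?_, ?_⟩, subset_union_right⟩
    · exact union_subset (hDS.trans sdiff_subset) hA
    · rw [card_union_of_disjoint hdisj, hDc]
      omega
  · intro C hC
    simp only [mem_filter, mem_powersetCard] at hC
    exact sdiff_union_of_subset hC.2
  · intro D hD
    rw [mem_powersetCard] at hD
    have hdisj : Disjoint D A := (sdiff_disjoint.mono_left hD.1)
    exact union_sdiff_cancel_right hdisj

/-- Key real inequality. -/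
lemma choose_ratio_bound (s t c k : ℕ) (hkt : k ≤ t) (htc : t ≤ c) (hcs : c ≤ s)
    (hs : 1 ≤ s) :
    (((c : ℝ) - (t : ℝ) + 1) / (s : ℝ)) ^ t * (s.choose c : ℝ)
      ≤ ((s - k).choose (c - k) : ℝ) := by
  rcases Nat.eq_zero_or_pos t with ht0 | ht1
  · have hk0 : k = 0 := by omega
    simp [ht0, hk0]
  have hnum : ((c : ℝ) - (t : ℝ) + 1) = ((c - t + 1 : ℕ) : ℝ) := by
    push_cast [Nat.cast_sub htc]; ring
  set r : ℝ := ((c : ℝ) - (t : ℝ) + 1) / (s : ℝ) with hrdef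
  have hs0 : (0 : ℝ) < (s : ℝ) := by exact_mod_cast hs
  have hr0 : 0 < r := by
    apply div_pos
    · have : (t : ℝ) ≤ (c : ℝ) := by exact_mod_cast htc
      linarith
    · exact hs0
  have hr1 : r ≤ 1 := by
    rw [hrdef, div_le_one hs0]
    have h1 : (c : ℝ) ≤ (s : ℝ) := by exact_mod_cast hcs
    have h2 : (1 : ℝ) ≤ (t : ℝ) := by exact_mod_cast ht1
    linarith
  have key : ∀ m, m ≤ t → r ^ m * (s.choose c : ℝ) ≤ ((s - m).choose (c - m) : ℝ) := by
    intro m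
    induction m with
    | zero => intro _; simp
    | succ k ih =>
      intro hk1
      have hkt' : k ≤ t := by omega
      have hklt : k < t := by omega
      have ihk := ih hkt'
      have hsk : (0 : ℝ) < ((s : ℝ) - (k : ℝ)) := by
        have : k < s := by omega
        have : (k : ℝ) < (s : ℝ) := by exact_mod_cast this
        linarith
      -- identity: (s-k) * C(s-k-1, c-k-1) = C(s-k, c-k) * (c-k)
      have hid : (s - k) * ((s - (k+1)).choose (c - (k+1))) = ((s - k).choose (c - k)) * (c - k) := by
        have h1 : s - k = (s - (k+1)) + 1 := by omega
        have h2 : c - k = (c - (k+1)) + 1 := by omega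
        rw [h1, h2]
        exact Nat.add_one_mul_choose_eq (s - (k+1)) (c - (k+1))
      have hidR : ((s : ℝ) - (k : ℝ)) * ((s - (k+1)).choose (c - (k+1)) : ℝ)
          = ((s - k).choose (c - k) : ℝ) * ((c : ℝ) - (k : ℝ)) := by
        have := congrArg (fun n : ℕ => (n : ℝ)) hid
        push_cast [Nat.cast_sub (show k ≤ s by omega), Nat.cast_sub (show k ≤ c by omega)] at this ⊢
        linarith
      -- r ≤ (c - k)/(s - k)
      have hrle : r ≤ ((c : ℝ) - (k : ℝ)) / ((s : ℝ) - (k : ℝ)) := by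
        rw [hrdef, div_le_div_iff₀ hs0 hsk]
        have hcast1 : (c : ℝ) - (t : ℝ) + 1 = ((c - t + 1 : ℕ) : ℝ) := hnum
        have hcast2 : (s : ℝ) - (k : ℝ) = ((s - k : ℕ) : ℝ) := by
          rw [Nat.cast_sub (show k ≤ s by omega)]
        have hcast3 : (c : ℝ) - (k : ℝ) = ((c - k : ℕ) : ℝ) := by
          rw [Nat.cast_sub (show k ≤ c by omega)]
        rw [hcast1, hcast2, hcast3]
        have hnat : (c - t + 1) * (s - k) ≤ (c - k) * s := by
          apply Nat.mul_le_mul <;> omega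
        exact_mod_cast hnat
      have hnn : (0 : ℝ) ≤ (((s - k).choose (c - k) : ℕ) : ℝ) := Nat.cast_nonneg _
      calc r ^ (k+1) * (s.choose c : ℝ) = r * (r ^ k * (s.choose c : ℝ)) := by ring
        _ ≤ r * ((s - k).choose (c - k) : ℝ) := by
            exact mul_le_mul_of_nonneg_left ihk (le_of_lt hr0)
        _ ≤ (((c : ℝ) - (k : ℝ)) / ((s : ℝ) - (k : ℝ))) * ((s - k).choose (c - k) : ℝ) := by
            exact mul_le_mul_of_nonneg_right hrle hnn
        _ = ((s - (k+1)).choose (c - (k+1)) : ℝ) := by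
            field_simp
            linarith [hidR]
  calc r ^ t * (s.choose c : ℝ) ≤ r ^ k * (s.choose c : ℝ) := by
        apply mul_le_mul_of_nonneg_right _ (Nat.cast_nonneg _)
        exact pow_le_pow_of_le_one (le_of_lt hr0) hr1 hkt
    _ ≤ _ := key k hkt

theorem stmt5 {α β : Type*} [DecidableEq α] (S : Finset α) (Q : Finset β)
    (s t c : ℕ) (hS : S.card = s) (hs : 1 ≤ s)
    (P : β → Finset α) (hPS : ∀ q ∈ Q, P q ⊆ S) (hPt : ∀ q ∈ Q, (P q).card ≤ t)
    (htc : t ≤ c) (hcs : c ≤ s) :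
    ∃ C ⊆ S, C.card = c ∧
      (Q.card : ℝ) * (((c : ℝ) - (t : ℝ) + 1) / (s : ℝ)) ^ t ≤
        ((Q.filter (fun q => P q ⊆ C)).card : ℝ) := by
  classical
  set r : ℝ := ((c : ℝ) - (t : ℝ) + 1) / (s : ℝ) with hrdef
  set 𝒞 := S.powersetCard c with h𝒞
  have hne : 𝒞.Nonempty := by
    rw [h𝒞, Finset.powersetCard_nonempty, hS]; exact hcs
  -- per-q lower bound on the number of C's containing P q
  have hperq : ∀ q ∈ Q, r ^ t * (s.choose c : ℝ)
      ≤ ((𝒞.filter (fun C => P q ⊆ C)).card : ℝ) := by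
    intro q hq
    have hk : (P q).card ≤ t := hPt q hq
    have hcount := count_supersets S (P q) c (hPS q hq) (hk.trans htc)
    rw [h𝒞, hcount, hS]
    exact choose_ratio_bound s t c (P q).card hk htc hcs hs
  -- double counting
  have hdc : ∑ C ∈ 𝒞, ((Q.filter (fun q => P q ⊆ C)).card : ℝ)
      = ∑ q ∈ Q, ((𝒞.filter (fun C => P q ⊆ C)).card : ℝ) := by
    simp_rw [Finset.card_filter]
    push_cast
    rw [Finset.sum_comm]
  have hsumle : ∑ _C ∈ 𝒞, ((Q.card : ℝ) * r ^ t)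
      ≤ ∑ C ∈ 𝒞, ((Q.filter (fun q => P q ⊆ C)).card : ℝ) := by
    rw [hdc, Finset.sum_const, nsmul_eq_mul]
    have h𝒞card : (𝒞.card : ℝ) = (s.choose c : ℝ) := by
      rw [h𝒞, Finset.card_powersetCard, hS]
    rw [h𝒞card]
    calc (s.choose c : ℝ) * ((Q.card : ℝ) * r ^ t)
        = ∑ _q ∈ Q, r ^ t * (s.choose c : ℝ) := by
          rw [Finset.sum_const, nsmul_eq_mul]; ring
      _ ≤ _ := Finset.sum_le_sum hperq
  obtain ⟨C, hC, hle⟩ := Finset.exists_le_of_sum_le hne hsumle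
  rw [h𝒞, mem_powersetCard] at hC
  exact ⟨C, hC.1, hC.2, hle⟩
end

section
/- Let S be a finite set of size s ≥ 1, let Q be a finite nonempty set, let P : Q → (finite subsets of S) be a function, and let t̄ ≥ 0 be a real number with (1/|Q|)·Σ_{q∈Q} |P(q)| ≤ t̄. Let c be an integer with ⌊2t̄⌋ ≤ c ≤ s. Then there exist a subset C ⊆ S with |C| = c and a subset Q' ⊆ Q with P(q) ⊆ C for every q ∈ Q' and |Q'| ≥ (|Q|/2) · ((c − ⌊2t̄⌋ + 1)/s)^⌊2t̄⌋ (as real numbers). -/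
/-!
By Markov's inequality at least half of the `q ∈ Q` have `|P q| ≤ t := ⌊2 t̄⌋`. Such a `P q` lies
in `(s - |P q|).choose (c - |P q|)` of the `s.choose c` subsets of `S` of size `c`, a fraction
`c (c - 1) ⋯ (c - |P q| + 1) / (s (s - 1) ⋯ (s - |P q| + 1)) ≥ ((c - t + 1) / s) ^ t`.
Averaging over all `c`-subsets `C` of `S` then yields one that contains `P q` for at least
`|Q| / 2 · ((c - t + 1) / s) ^ t` of these `q`.
-/

open Finset

theorem card_filter_lt_mul_le_sum {β : Type*} (Q : Finset β) (f : β → ℕ) (t : ℕ) :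
    #{q ∈ Q | t < f q} * (t + 1) ≤ ∑ q ∈ Q, f q :=
  calc #{q ∈ Q | t < f q} * (t + 1) ≤ ∑ q ∈ Q with t < f q, f q := by
        rw [← smul_eq_mul]; exact card_nsmul_le_sum _ _ _ fun q hq => (mem_filter.1 hq).2
    _ ≤ ∑ q ∈ Q, f q := sum_le_sum_of_subset (filter_subset _ _)

theorem card_div_two_le_card_filter_le_floor {β : Type*} (Q : Finset β) (f : β → ℕ) (a : ℝ)
    (havg : 1 / (#Q : ℝ) * ∑ q ∈ Q, (f q : ℝ) ≤ a) :
    (#Q : ℝ) / 2 ≤ #{q ∈ Q | f q ≤ ⌊2 * a⌋₊} := by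
  set t := ⌊2 * a⌋₊
  have hsum : ∑ q ∈ Q, (f q : ℝ) ≤ a * #Q := by
    rcases Q.eq_empty_or_nonempty with rfl | hQ
    · simp
    have hQ : (0 : ℝ) < #Q := by exact_mod_cast hQ.card_pos
    rwa [one_div, inv_mul_le_iff₀ hQ, mul_comm] at havg
  have hmarkov : (#{q ∈ Q | t < f q} : ℝ) * (t + 1) ≤ ∑ q ∈ Q, (f q : ℝ) := by
    exact_mod_cast card_filter_lt_mul_le_sum Q f t
  have hsplit : (#{q ∈ Q | f q ≤ t} : ℝ) + #{q ∈ Q | t < f q} = #Q := by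
    simp_rw [← not_le]; exact_mod_cast card_filter_add_card_filter_not _
  have ht : 2 * a < t + 1 := Nat.lt_floor_add_one (2 * a)
  nlinarith

theorem exists_mul_card_le_card_filter {β γ : Type*} {F : Finset γ} (hF : F.Nonempty)
    (Q : Finset β) (R : β → γ → Prop) [∀ q C, Decidable (R q C)] (m : ℝ)
    (h : ∀ q ∈ Q, m * #F ≤ #{C ∈ F | R q C}) :
    ∃ C ∈ F, m * #Q ≤ #{q ∈ Q | R q C} := by
  refine exists_le_of_sum_le hF ?_
  have hcount : ∑ C ∈ F, (#{q ∈ Q | R q C} : ℝ) = ∑ q ∈ Q, (#{C ∈ F | R q C} : ℝ) := by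
    exact_mod_cast (sum_card_bipartiteAbove_eq_sum_card_bipartiteBelow R).symm
  calc ∑ _C ∈ F, m * #Q = ∑ _q ∈ Q, m * #F := by simp only [sum_const, nsmul_eq_mul]; ring
    _ ≤ ∑ q ∈ Q, (#{C ∈ F | R q C} : ℝ) := sum_le_sum h
    _ = _ := hcount.symm

theorem descFactorial_mul_choose_eq (s c k : ℕ) (hkc : k ≤ c) :
    c.descFactorial k * s.choose c = s.descFactorial k * (s - k).choose (c - k) := by
  rw [Nat.descFactorial_eq_factorial_mul_choose, Nat.descFactorial_eq_factorial_mul_choose,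
    mul_assoc, mul_comm (c.choose k), Nat.choose_mul hkc, mul_assoc]

theorem pow_mul_choose_le_pow_mul_choose_sub (s c k : ℕ) (hkc : k ≤ c) :
    (c + 1 - k) ^ k * s.choose c ≤ s ^ k * (s - k).choose (c - k) :=
  calc (c + 1 - k) ^ k * s.choose c ≤ c.descFactorial k * s.choose c := by
        gcongr; exact Nat.pow_sub_le_descFactorial c k
    _ = s.descFactorial k * (s - k).choose (c - k) := descFactorial_mul_choose_eq s c k hkc
    _ ≤ s ^ k * (s - k).choose (c - k) := by gcongr; exact Nat.descFactorial_le_pow s k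

theorem sub_add_one_div_pow_mul_choose_le_choose_sub (s c k : ℕ) (hkc : k ≤ c) :
    (((c : ℝ) - k + 1) / s) ^ k * s.choose c ≤ (s - k).choose (c - k) := by
  rcases (Nat.zero_le (s ^ k)).eq_or_lt with hsk | hsk
  · rw [div_pow, ← Nat.cast_pow, ← hsk]
    simp
  have key : (((c + 1 - k) ^ k * s.choose c : ℕ) : ℝ) ≤ (s ^ k * (s - k).choose (c - k) : ℕ) :=
    Nat.cast_le.2 (pow_mul_choose_le_pow_mul_choose_sub s c k hkc)
  rw [div_pow, div_mul_eq_mul_div, div_le_iff₀ (by exact_mod_cast hsk)]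
  push_cast [Nat.cast_sub (by omega : k ≤ c + 1)] at key
  rw [sub_add_eq_add_sub]
  linarith

theorem sub_add_one_div_pow_le (s c k t : ℕ) (hkt : k ≤ t) (htc : t ≤ c) (hcs : c ≤ s) :
    (((c : ℝ) - t + 1) / s) ^ t ≤ (((c : ℝ) - k + 1) / s) ^ k := by
  have htc' : (t : ℝ) ≤ c := by exact_mod_cast htc
  have hr : 0 ≤ ((c : ℝ) - t + 1) / s := div_nonneg (by linarith) (Nat.cast_nonneg s)
  calc (((c : ℝ) - t + 1) / s) ^ t ≤ (((c : ℝ) - t + 1) / s) ^ k := by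
        rcases Nat.eq_zero_or_pos t with rfl | ht
        · rw [Nat.le_zero.1 hkt]
        refine pow_le_pow_of_le_one hr (div_le_one_of_le₀ ?_ (Nat.cast_nonneg s)) hkt
        have : (1 : ℝ) ≤ t := by exact_mod_cast ht
        have : (c : ℝ) ≤ s := by exact_mod_cast hcs
        linarith
    _ ≤ (((c : ℝ) - k + 1) / s) ^ k := by
        have : (k : ℝ) ≤ t := by exact_mod_cast hkt
        gcongr

theorem sub_add_one_div_pow_mul_card_le_card_filter_superset {α : Type*} [DecidableEq α]
    {T S : Finset α} (hTS : T ⊆ S) {c t : ℕ} (hT : #T ≤ t) (htc : t ≤ c) (hcS : c ≤ #S) :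
    (((c : ℝ) - t + 1) / #S) ^ t * #(S.powersetCard c) ≤ #{C ∈ S.powersetCard c | T ⊆ C} := by
  rw [card_filter_powersetCard_subset T S c hTS (hT.trans htc), card_powersetCard]
  calc (((c : ℝ) - t + 1) / #S) ^ t * (#S).choose c
      ≤ (((c : ℝ) - #T + 1) / #S) ^ #T * (#S).choose c := by
        gcongr; exact sub_add_one_div_pow_le _ _ _ _ hT htc hcS
    _ ≤ _ := sub_add_one_div_pow_mul_choose_le_choose_sub _ _ _ (hT.trans htc)

theorem stmt6_general {α β : Type*} [DecidableEq α] (S : Finset α) (Q : Finset β)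
    (s : ℕ) (hS : S.card = s)
    (P : β → Finset α) (hPS : ∀ q ∈ Q, P q ⊆ S)
    (tbar : ℝ)
    (havg : (1 / (Q.card : ℝ)) * ∑ q ∈ Q, ((P q).card : ℝ) ≤ tbar)
    (c : ℕ) (hc1 : ⌊2 * tbar⌋₊ ≤ c) (hc2 : c ≤ s) :
    ∃ C ⊆ S, C.card = c ∧
      ∃ Q' ⊆ Q, (∀ q ∈ Q', P q ⊆ C) ∧
        ((Q.card : ℝ) / 2) * (((c : ℝ) - (⌊2 * tbar⌋₊ : ℝ) + 1) / (s : ℝ)) ^ (⌊2 * tbar⌋₊) ≤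
          (Q'.card : ℝ) := by
  subst hS
  set t := ⌊2 * tbar⌋₊
  set Q₀ := {q ∈ Q | #(P q) ≤ t}
  have hQ₀ : (#Q : ℝ) / 2 ≤ #Q₀ := card_div_two_le_card_filter_le_floor Q (fun q => #(P q)) tbar havg
  obtain ⟨C, hC, hQ'⟩ := exists_mul_card_le_card_filter (powersetCard_nonempty.2 hc2) Q₀
    (fun q C => P q ⊆ C) _ fun q hq => by
      rw [mem_filter] at hq
      exact sub_add_one_div_pow_mul_card_le_card_filter_superset (hPS q hq.1) hq.2 hc1 hc2
  rw [mem_powersetCard] at hC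
  have hr : 0 ≤ ((c : ℝ) - t + 1) / #S := by
    have : (t : ℝ) ≤ c := by exact_mod_cast hc1
    exact div_nonneg (by linarith) (Nat.cast_nonneg _)
  refine ⟨C, hC.1, hC.2, {q ∈ Q₀ | P q ⊆ C}, (filter_subset _ _).trans (filter_subset _ _),
    fun q hq => (mem_filter.1 hq).2, ?_⟩
  calc (#Q : ℝ) / 2 * (((c : ℝ) - t + 1) / #S) ^ t ≤ (((c : ℝ) - t + 1) / #S) ^ t * #Q₀ := by
        rw [mul_comm]; gcongr
    _ ≤ _ := hQ'

theorem stmt6 {α β : Type*} [DecidableEq α] (S : Finset α) (Q : Finset β)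
    (s : ℕ) (hS : S.card = s) (hs : 1 ≤ s) (hQ : Q.Nonempty)
    (P : β → Finset α) (hPS : ∀ q ∈ Q, P q ⊆ S)
    (tbar : ℝ) (htbar : 0 ≤ tbar)
    (havg : (1 / (Q.card : ℝ)) * ∑ q ∈ Q, ((P q).card : ℝ) ≤ tbar)
    (c : ℕ) (hc1 : ⌊2 * tbar⌋₊ ≤ c) (hc2 : c ≤ s) :
    ∃ C ⊆ S, C.card = c ∧
      ∃ Q' ⊆ Q, (∀ q ∈ Q', P q ⊆ C) ∧
        ((Q.card : ℝ) / 2) * (((c : ℝ) - (⌊2 * tbar⌋₊ : ℝ) + 1) / (s : ℝ)) ^ (⌊2 * tbar⌋₊) ≤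
          (Q'.card : ℝ) :=
  stmt6_general S Q s hS P hPS tbar havg c hc1 hc2
end

section
/- There exist real constants a₁ ≥ a₂ > 0 such that the following holds. Let m = f_k be a Fibonacci number with k ≥ 2, let n be a positive integer divisible by m, and let L be the scaled Fibonacci lattice L = {((n/m)·i, (n/m)·(i·f_{k−1} mod m)) : i = 0, 1, …, m−1} ⊆ ℝ². Then for every α > 0, every axis-aligned rectangle R contained in [0, n − n/m] × [0, n − n/m] whose area equals α·n²/m contains at least ⌊α/a₁⌋ and at most ⌈α/a₂⌉ points of L. -/
/-- The number of points of the scaled Fibonacci lattice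
`{((n/m)·i, (n/m)·(i·f_{k−1} mod m)) : i = 0, …, m−1}` (with `m = f_k`) lying in the
axis-aligned rectangle `[x₁, x₂] × [y₁, y₂]`. -/
noncomputable def fibLatticeCount (k m n : ℕ) (x₁ x₂ y₁ y₂ : ℝ) : ℕ :=
  ((Finset.range m).filter (fun i : ℕ =>
    x₁ ≤ (n : ℝ) / m * (i : ℝ) ∧ (n : ℝ) / m * (i : ℝ) ≤ x₂ ∧
    y₁ ≤ (n : ℝ) / m * (((i * Nat.fib (k - 1)) % m : ℕ) : ℝ) ∧
    (n : ℝ) / m * (((i * Nat.fib (k - 1)) % m : ℕ) : ℝ) ≤ y₂)).card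

/-!
After scaling by `m / n`, the points of `L` are the points in `[0, m)²` of the lattice
`Λ = {(x, y) ∈ ℤ² | y ≡ f_{k-1} x (mod f_k)}`. By d'Ocagne's identity, for `1 ≤ j < k` the
vectors `(f_j, ±f_{k-j})` and `(f_{j+1}, ∓f_{k-j-1})` form a basis of `Λ` whose second
coordinates have opposite signs.

Upper bound: if `(x, y) ∈ Λ` with `0 < |x| < m`, expand it in the basis with
`f_j ≤ |x| < f_{j+1}`. The two coefficients cannot have the same sign, so `|y| ≥ f_{k-j}` and
`m ≤ 3 |x| |y|`. Two points of `L` in a rectangle of height `H` are therefore at least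
`m / (3H)` apart horizontally.

Lower bound: a box of size `f_{j+2} × f_{k-j+1}` contains a fundamental parallelogram of that
basis, hence a point of `Λ`. Choosing `j` by the width, every box with sides at most `m` and area
at least `5m` contains a point of `Λ`; cutting the rectangle into `⌊α / 10⌋` separated vertical
strips gives as many points.
-/

open Set

def cross (v w : ℤ × ℤ) : ℤ := v.1 * w.2 - v.2 * w.1

def congrLattice (m c : ℤ) : AddSubgroup (ℤ × ℤ) where
  carrier := {w | m ∣ w.2 - w.1 * c}
  add_mem' {v w} hv hw := by
    show m ∣ (v + w).2 - (v + w).1 * c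
    rw [show (v + w).2 - (v + w).1 * c = (v.2 - v.1 * c) + (w.2 - w.1 * c) by
      simp only [Prod.fst_add, Prod.snd_add]; ring]
    exact dvd_add hv hw
  zero_mem' := by simp
  neg_mem' {w} hw := by
    show m ∣ (-w).2 - (-w).1 * c
    rw [show (-w).2 - (-w).1 * c = -(w.2 - w.1 * c) by
      simp only [Prod.fst_neg, Prod.snd_neg]; ring]
    exact hw.neg_right

@[simp] lemma mem_congrLattice {m c : ℤ} {w : ℤ × ℤ} :
    w ∈ congrLattice m c ↔ m ∣ w.2 - w.1 * c := Iff.rfl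

lemma congrLattice.exists_eq_zsmul_add_zsmul {m c : ℤ} {e f w : ℤ × ℤ}
    (he : e ∈ congrLattice m c) (hf : f ∈ congrLattice m c) (hw : w ∈ congrLattice m c)
    (hdet₀ : cross e f ≠ 0) (hdet : cross e f ∣ m) :
    ∃ σ τ : ℤ, w = σ • e + τ • f := by
  rw [mem_congrLattice] at he hf hw
  obtain ⟨σ, hσ⟩ : cross e f ∣ cross w f := hdet.trans <| by
    rw [show cross w f = w.1 * (f.2 - f.1 * c) - f.1 * (w.2 - w.1 * c) by unfold cross; ring]
    exact dvd_sub (dvd_mul_of_dvd_right hf _) (dvd_mul_of_dvd_right hw _)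
  obtain ⟨τ, hτ⟩ : cross e f ∣ cross e w := hdet.trans <| by
    rw [show cross e w = e.1 * (w.2 - w.1 * c) - w.1 * (e.2 - e.1 * c) by unfold cross; ring]
    exact dvd_sub (dvd_mul_of_dvd_right hw _) (dvd_mul_of_dvd_right he _)
  refine ⟨σ, τ, Prod.ext ?_ ?_⟩ <;> apply mul_left_cancel₀ hdet₀ <;>
    simp only [cross, Prod.fst_add, Prod.snd_add, Prod.smul_fst, Prod.smul_snd, smul_eq_mul]
      at hσ hτ ⊢
  · linear_combination e.1 * hσ + f.1 * hτ
  · linear_combination e.2 * hσ + f.2 * hτ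

lemma abs_add_of_mul_nonneg {R : Type*} [Ring R] [LinearOrder R] [IsStrictOrderedRing R]
    {x y : R} (h : 0 ≤ x * y) : |x + y| = |x| + |y| :=
  (abs_add_eq_add_abs_iff x y).mpr (mul_nonneg_iff.mp h)

lemma abs_snd_le_of_eq_zsmul_add_zsmul {e f w : ℤ × ℤ} {σ τ : ℤ} (hw : w = σ • e + τ • f)
    (he₁ : 0 ≤ e.1) (hf₁ : |w.1| < f.1) (hw₁ : w.1 ≠ 0) (hef : e.2 * f.2 ≤ 0) :
    |e.2| ≤ |w.2| := by
  subst hw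
  simp only [Prod.fst_add, Prod.snd_add, Prod.smul_fst, Prod.smul_snd, smul_eq_mul] at *
  have hf₀ : 0 < f.1 := (abs_nonneg _).trans_lt hf₁
  have hστ : σ * τ ≤ 0 := by
    by_contra! h
    have : |σ * e.1 + τ * f.1| = |σ| * e.1 + |τ| * f.1 := by
      rw [abs_add_of_mul_nonneg (by rw [mul_mul_mul_comm]; positivity), abs_mul, abs_mul,
        abs_of_nonneg he₁, abs_of_pos hf₀]
    nlinarith [Int.one_le_abs (right_ne_zero_of_mul h.ne'), abs_nonneg σ]
  have hσ : σ ≠ 0 := by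
    rintro rfl
    rcases eq_or_ne τ 0 with rfl | hτ
    · simp at hw₁
    · rw [zero_mul, zero_add, abs_mul, abs_of_pos hf₀] at hf₁
      nlinarith [Int.one_le_abs hτ]
  have hprod : 0 ≤ σ * e.2 * (τ * f.2) := by
    rw [mul_mul_mul_comm]; exact mul_nonneg_of_nonpos_of_nonpos hστ hef
  rw [abs_add_of_mul_nonneg hprod, abs_mul, abs_mul]
  nlinarith [Int.one_le_abs hσ, abs_nonneg e.2, abs_nonneg τ, abs_nonneg f.2]

lemma max_zero_sub_mul_mem_Icc {r θ : ℝ} (h₀ : 0 ≤ θ) (h₁ : θ ≤ 1) :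
    max r 0 - θ * r ∈ Icc 0 |r| := by
  rcases le_total r 0 with hr | hr
  · rw [max_eq_right hr, abs_of_nonpos hr]; constructor <;> nlinarith
  · rw [max_eq_left hr, abs_of_nonneg hr]; constructor <;> nlinarith

lemma floor_mul_add_floor_mul_mem_Icc {c₁ c₂ u v A : ℝ}
    (h : c₁ * u + c₂ * v = A + max u 0 + max v 0) :
    ⌊c₁⌋ * u + ⌊c₂⌋ * v ∈ Icc A (A + |u| + |v|) := by
  have h₁ := max_zero_sub_mul_mem_Icc (r := u) (Int.fract_nonneg c₁) (Int.fract_lt_one c₁).le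
  have h₂ := max_zero_sub_mul_mem_Icc (r := v) (Int.fract_nonneg c₂) (Int.fract_lt_one c₂).le
  rw [Int.fract, mem_Icc] at h₁ h₂
  constructor <;> nlinarith

-- Round down the coordinates of the corner `(A + e₁⁺ + f₁⁺, B + e₂⁺ + f₂⁺)` in the basis `e, f`.
lemma exists_mem_Icc_prod_Icc (Λ : AddSubgroup (ℤ × ℤ)) {e f : ℤ × ℤ} (he : e ∈ Λ) (hf : f ∈ Λ)
    (hdet : cross e f ≠ 0) (A B : ℝ) :
    ∃ w ∈ Λ, (w.1 : ℝ) ∈ Icc A (A + |(e.1 : ℝ)| + |(f.1 : ℝ)|) ∧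
      (w.2 : ℝ) ∈ Icc B (B + |(e.2 : ℝ)| + |(f.2 : ℝ)|) := by
  set X := A + max (e.1 : ℝ) 0 + max (f.1 : ℝ) 0
  set Y := B + max (e.2 : ℝ) 0 + max (f.2 : ℝ) 0
  have hd : (cross e f : ℝ) ≠ 0 := by exact_mod_cast hdet
  set c₁ := (X * f.2 - Y * f.1) / cross e f
  set c₂ := (e.1 * Y - e.2 * X) / cross e f
  have hX : c₁ * e.1 + c₂ * f.1 = X := by
    rw [div_mul_eq_mul_div, div_mul_eq_mul_div, ← add_div, div_eq_iff hd]
    push_cast [cross]; ring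
  have hY : c₁ * e.2 + c₂ * f.2 = Y := by
    rw [div_mul_eq_mul_div, div_mul_eq_mul_div, ← add_div, div_eq_iff hd]
    push_cast [cross]; ring
  refine ⟨⌊c₁⌋ • e + ⌊c₂⌋ • f, add_mem (zsmul_mem he _) (zsmul_mem hf _), ?_, ?_⟩ <;>
    simp only [Prod.fst_add, Prod.snd_add, Prod.smul_fst, Prod.smul_snd, smul_eq_mul]
  · exact_mod_cast floor_mul_add_floor_mul_mem_Icc hX
  · exact_mod_cast floor_mul_add_floor_mul_mem_Icc hY

open Nat (fib)

lemma fib_add_mul_fib_add_one (a b : ℕ) :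
    (fib (a + b) * fib (a + 1) : ℤ) = fib (a + b + 1) * fib a + (-1) ^ a * fib b := by
  induction a with
  | zero => simp
  | succ a ih =>
    rw [show a + 1 + b = a + b + 1 by omega, Nat.fib_add_two, Nat.fib_add_two, pow_succ]
    push_cast
    linear_combination -ih

def fibVec (a b : ℕ) : ℤ × ℤ := (fib (a + 1), (-1) ^ a * fib b)

@[simp] lemma fibVec_fst (a b : ℕ) : (fibVec a b).1 = fib (a + 1) := rfl

@[simp] lemma abs_fibVec_snd (a b : ℕ) : |(fibVec a b).2| = fib b := by
  simp [fibVec, abs_mul]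

lemma fibVec_mem {a b l : ℕ} (h : a + b = l) :
    fibVec a b ∈ congrLattice (fib (l + 1)) (fib l) :=
  ⟨-fib a, by subst h; simp only [fibVec]; linear_combination (fib_add_mul_fib_add_one a b).symm⟩

lemma cross_fibVec (i t : ℕ) :
    cross (fibVec i (t + 1)) (fibVec (i + 1) t) = (-1) ^ (i + 1) * fib (i + t + 2) := by
  rw [show i + t + 2 = i + 1 + t + 1 by omega, Nat.fib_add]
  simp only [cross, fibVec]
  push_cast
  ring

lemma fibVec_snd_mul_fibVec_snd (i t : ℕ) :
    (fibVec i (t + 1)).2 * (fibVec (i + 1) t).2 = -(fib (t + 1) * fib t) := by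
  have h : ((-1 : ℤ) ^ i) ^ 2 = 1 := by rw [← pow_mul, mul_comm, pow_mul, neg_one_sq, one_pow]
  simp only [fibVec]
  linear_combination (-(fib (t + 1) * fib t : ℤ)) * h

lemma fib_add_add_two_le_three_mul (i t : ℕ) :
    fib (i + t + 2) ≤ 3 * fib (i + 1) * fib (t + 1) := by
  rw [show i + t + 2 = i + 1 + t + 1 by omega, Nat.fib_add, Nat.fib_add_two]
  have := @Nat.fib_le_fib_succ i
  have := @Nat.fib_le_fib_succ t
  nlinarith

lemma fib_add_four_mul_fib_add_two_le (i t : ℕ) :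
    fib (i + 4) * fib (t + 2) ≤ 5 * fib (i + t + 2) := by
  have h := Nat.fib_add (i + 3) (t + 1)
  have h₁ : fib (i + t + 3) = fib (i + t + 1) + fib (i + t + 2) := Nat.fib_add_two
  have h₂ : fib (i + t + 4) = fib (i + t + 2) + fib (i + t + 3) := Nat.fib_add_two
  have h₃ : fib (i + t + 5) = fib (i + t + 3) + fib (i + t + 4) := Nat.fib_add_two
  have : fib (i + t + 1) ≤ fib (i + t + 2) := Nat.fib_le_fib_succ
  rw [show i + 3 + (t + 1) + 1 = i + t + 5 by omega] at h
  linarith [Nat.zero_le (fib (i + 3) * fib (t + 1))]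

lemma cross_fibVec_ne_zero (i t : ℕ) : cross (fibVec i (t + 1)) (fibVec (i + 1) t) ≠ 0 := by
  rw [cross_fibVec]
  exact mul_ne_zero (pow_ne_zero _ (by norm_num))
    (by exact_mod_cast (Nat.fib_pos.mpr (by omega)).ne')

theorem fib_le_three_mul_abs_mul_abs {l : ℕ} {w : ℤ × ℤ}
    (hw : w ∈ congrLattice (fib (l + 1)) (fib l)) (hw₁ : w.1 ≠ 0) (hlt : |w.1| < fib (l + 1)) :
    (fib (l + 1) : ℤ) ≤ 3 * |w.1| * |w.2| := by
  set g := Nat.greatestFib w.1.natAbs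
  have hlow : (fib g : ℤ) ≤ |w.1| := by
    rw [← Int.natCast_natAbs]; exact_mod_cast Nat.fib_greatestFib_le _
  have hup : |w.1| < fib (g + 1) := by
    rw [← Int.natCast_natAbs]; exact_mod_cast Nat.lt_fib_greatestFib_add_one _
  have hg₂ : 2 ≤ g := Nat.le_greatestFib.mpr (Int.natAbs_pos.mpr hw₁)
  have hgl : g ≤ l := by
    by_contra! h
    have : (fib (l + 1) : ℤ) ≤ fib g := by exact_mod_cast Nat.fib_mono h
    linarith
  obtain ⟨i, t, hi, rfl⟩ : ∃ i t, g = i + 1 ∧ l = i + t + 1 :=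
    ⟨g - 1, l - g, by omega, by omega⟩
  rw [hi] at hlow hup
  have he := fibVec_mem (show i + (t + 1) = i + t + 1 by omega)
  have hf := fibVec_mem (show i + 1 + t = i + t + 1 by omega)
  obtain ⟨σ, τ, hστ⟩ := congrLattice.exists_eq_zsmul_add_zsmul he hf hw (cross_fibVec_ne_zero i t)
    (by rw [cross_fibVec]; exact (isUnit_neg_one.pow _).mul_left_dvd.mpr dvd_rfl)
  have hsnd : (fib (t + 1) : ℤ) ≤ |w.2| := by
    simpa using abs_snd_le_of_eq_zsmul_add_zsmul hστ (by simp) (by simpa using hup) hw₁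
      (by rw [fibVec_snd_mul_fibVec_snd]; exact neg_nonpos.mpr (by positivity))
  calc (fib (i + t + 1 + 1) : ℤ) ≤ 3 * fib (i + 1) * fib (t + 1) := by
        exact_mod_cast fib_add_add_two_le_three_mul i t
    _ ≤ 3 * |w.1| * |w.2| := by gcongr

theorem exists_mem_congrLattice_Icc_prod_Icc {l : ℕ} {U V : ℝ} (hU : U ≤ fib (l + 1))
    (hV₀ : 0 ≤ V) (hV : V ≤ fib (l + 1)) (hUV : 5 * fib (l + 1) ≤ U * V) (A B : ℝ) :
    ∃ w ∈ congrLattice (fib (l + 1)) (fib l),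
      (w.1 : ℝ) ∈ Icc A (A + U) ∧ (w.2 : ℝ) ∈ Icc B (B + V) := by
  have hm : (0 : ℝ) < fib (l + 1) := by exact_mod_cast Nat.fib_pos.mpr l.succ_pos
  have hU₂ : 2 ≤ U := by nlinarith
  set g := Nat.greatestFib ⌊U⌋₊
  have hlow : (fib g : ℝ) ≤ U :=
    le_trans (by exact_mod_cast Nat.fib_greatestFib_le _) (Nat.floor_le (by linarith))
  have hup : U < fib (g + 1) := (Nat.lt_floor_add_one U).trans_le <| by
    exact_mod_cast Nat.lt_fib_greatestFib_add_one ⌊U⌋₊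
  have hg₃ : 3 ≤ g :=
    Nat.le_greatestFib.mpr (Nat.le_floor (by norm_num [Nat.fib_add_two]; linarith))
  have hgl : g ≤ l + 2 := by
    by_contra! h
    have h₁ : (fib (l + 3) : ℝ) ≤ fib g := by exact_mod_cast Nat.fib_mono h
    have h₂ : (fib (l + 3) : ℝ) = fib (l + 1) + fib (l + 2) := by exact_mod_cast Nat.fib_add_two
    have h₃ : (0 : ℝ) < fib (l + 2) := by exact_mod_cast Nat.fib_pos.mpr (by omega)
    linarith
  obtain ⟨i, t, hi, rfl⟩ : ∃ i t, g = i + 3 ∧ l = i + t + 1 :=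
    ⟨g - 3, l + 2 - g, by omega, by omega⟩
  rw [hi] at hlow hup
  have hV' : (fib (t + 2) : ℝ) ≤ V := by
    by_contra! h
    have := mul_lt_mul'' hup h (by linarith) hV₀
    have := fib_add_four_mul_fib_add_two_le i t
    have : (fib (i + 4) * fib (t + 2) : ℝ) ≤ 5 * fib (i + t + 2) := by exact_mod_cast this
    linarith
  obtain ⟨w, hw, hw₁, hw₂⟩ := exists_mem_Icc_prod_Icc _
    (fibVec_mem (show i + (t + 1) = i + t + 1 by omega))
    (fibVec_mem (show i + 1 + t = i + t + 1 by omega)) (cross_fibVec_ne_zero i t) A B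
  refine ⟨w, hw, Icc_subset_Icc_right ?_ hw₁, Icc_subset_Icc_right ?_ hw₂⟩
  · have : (fib (i + 3) : ℝ) = fib (i + 1) + fib (i + 2) := by exact_mod_cast Nat.fib_add_two
    simp only [fibVec_fst, Int.cast_natCast, Nat.abs_cast]
    linarith
  · have : (fib (t + 2) : ℝ) = fib t + fib (t + 1) := by exact_mod_cast Nat.fib_add_two
    simp only [← Int.cast_abs, abs_fibVec_snd, Int.cast_natCast]
    linarith

lemma Finset.card_le_floor_div_add_one {ι : Type*} (s : Finset ι) (f : ι → ℝ) {A A' δ : ℝ}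
    (hδ : 0 < δ) (hf : ∀ i ∈ s, f i ∈ Set.Icc A A')
    (hsep : ∀ i ∈ s, ∀ j ∈ s, i ≠ j → δ ≤ |f i - f j|) :
    s.card ≤ ⌊(A' - A) / δ⌋₊ + 1 := by
  have hpos : ∀ i ∈ s, 0 ≤ (f i - A) / δ := fun i hi =>
    div_nonneg (sub_nonneg.mpr (hf i hi).1) hδ.le
  simpa using card_le_card_of_injOn (fun i => ⌊(f i - A) / δ⌋₊)
    (t := range (⌊(A' - A) / δ⌋₊ + 1))
    (fun i hi => mem_range.mpr <| Nat.lt_succ_of_le <| Nat.floor_le_floor <|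
      div_le_div_of_nonneg_right (by linarith [(hf i hi).2]) hδ.le)
    (fun i hi j hj hij => by
      by_contra hne
      have h := Int.abs_sub_lt_one_of_floor_eq_floor (a := (f i - A) / δ) (b := (f j - A) / δ)
        (by rw [← Int.natCast_floor_eq_floor (hpos i hi),
              ← Int.natCast_floor_eq_floor (hpos j hj)]
            exact congrArg _ hij)
      rw [← sub_div, sub_sub_sub_cancel_right, abs_div, abs_of_pos hδ, div_lt_one hδ] at h
      exact (hsep i hi j hj hne).not_gt h)

noncomputable def latticeIndicesIn (m c : ℕ) (A A' B B' : ℝ) : Finset ℕ :=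
  (Finset.range m).filter fun i => (i : ℝ) ∈ Icc A A' ∧ ((i * c % m : ℕ) : ℝ) ∈ Icc B B'

lemma natCast_mem_congrLattice (m c i : ℕ) :
    ((i : ℤ), ((i * c % m : ℕ) : ℤ)) ∈ congrLattice m c := by
  simpa using (Int.mod_modEq ((i : ℤ) * c) m).symm.dvd

lemma natCast_mul_mod_eq {m c i : ℕ} {y : ℤ} (h : ((i : ℤ), y) ∈ congrLattice m c)
    (hy₀ : 0 ≤ y) (hy : y < m) : ((i * c % m : ℕ) : ℤ) = y := by
  push_cast
  rw [Int.modEq_iff_dvd.mpr h, Int.emod_eq_of_lt hy₀ hy]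

theorem card_latticeIndicesIn_le {l : ℕ} {A A' B B' : ℝ} (hB : B < B') :
    (latticeIndicesIn (fib (l + 1)) (fib l) A A' B B').card ≤
      ⌊3 * ((A' - A) * (B' - B)) / fib (l + 1)⌋₊ + 1 := by
  have hm : (0 : ℝ) < fib (l + 1) := by exact_mod_cast Nat.fib_pos.mpr l.succ_pos
  calc _ ≤ ⌊(A' - A) / (fib (l + 1) / (3 * (B' - B)))⌋₊ + 1 := by
        refine Finset.card_le_floor_div_add_one _ (fun i : ℕ => (i : ℝ))
          (div_pos hm (by linarith)) (fun i hi => (Finset.mem_filter.mp hi).2.1)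
          fun i hi j hj hij => ?_
        simp only [latticeIndicesIn, Finset.mem_filter, Finset.mem_range, mem_Icc] at hi hj
        have key := fib_le_three_mul_abs_mul_abs
          (sub_mem (natCast_mem_congrLattice _ (fib l) i) (natCast_mem_congrLattice _ _ j))
          (by simp only [Prod.fst_sub]; omega) (by simp only [Prod.fst_sub]; rw [abs_lt]; omega)
        simp only [Prod.fst_sub, Prod.snd_sub] at key
        generalize i * fib l % fib (l + 1) = yi at hi key
        generalize j * fib l % fib (l + 1) = yj at hj key
        have key' : (fib (l + 1) : ℝ) ≤ 3 * |(i : ℝ) - j| * |(yi : ℝ) - yj| := by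
          exact_mod_cast key
        have hy : |(yi : ℝ) - yj| ≤ B' - B := abs_sub_le_iff.mpr ⟨by linarith, by linarith⟩
        rw [div_le_iff₀ (by linarith)]
        nlinarith [abs_nonneg ((i : ℝ) - j)]
    _ = _ := by rw [div_div_eq_mul_div]; ring_nf

theorem le_card_latticeIndicesIn {l q : ℕ} {A A' B B' : ℝ} (hA : 0 ≤ A)
    (hA' : A' < fib (l + 1)) (hB : 0 ≤ B) (hBB' : B ≤ B') (hB' : B' < fib (l + 1))
    (hq : 10 * q * fib (l + 1) ≤ (A' - A) * (B' - B)) :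
    q ≤ (latticeIndicesIn (fib (l + 1)) (fib l) A A' B B').card := by
  rcases q.eq_zero_or_pos with rfl | hq₀
  · exact Nat.zero_le _
  have hm : (0 : ℝ) < fib (l + 1) := by exact_mod_cast Nat.fib_pos.mpr l.succ_pos
  have hq₀' : (0 : ℝ) < q := by exact_mod_cast hq₀
  have hW : 0 < A' - A := pos_of_mul_pos_left (by nlinarith) (sub_nonneg.mpr hBB')
  set δ := (A' - A) / q
  have hδ : 0 < δ := div_pos hW hq₀'
  have hqδ : q * δ = A' - A := mul_div_cancel₀ _ hq₀'.ne'
  have hbox (r : ℕ) := exists_mem_congrLattice_Icc_prod_Icc (l := l) (U := δ / 2) (V := B' - B)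
    (by nlinarith [show (1 : ℝ) ≤ q by exact_mod_cast hq₀]) (sub_nonneg.mpr hBB') (by linarith)
    (by nlinarith) (A + r * δ) B
  choose w hw hw₁ hw₂ using hbox
  have hw₁₀ (r : ℕ) : 0 ≤ (w r).1 := by
    exact_mod_cast (by positivity : 0 ≤ A + r * δ).trans (hw₁ r).1
  -- The strips `[A + r δ, A + r δ + δ / 2]` are disjoint, and `r` is read off the abscissa.
  have hfloor (r : ℕ) : ⌊((w r).1 - A) / δ⌋₊ = r := by
    have : 0 ≤ (r : ℝ) * δ := by positivity
    rw [Nat.floor_eq_iff (div_nonneg (by linarith [(hw₁ r).1]) hδ.le), le_div_iff₀ hδ,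
      div_lt_iff₀ hδ]
    constructor <;> linarith [(hw₁ r).1, (hw₁ r).2]
  have hcast (r : ℕ) : (((w r).1.toNat : ℕ) : ℤ) = (w r).1 := Int.toNat_of_nonneg (hw₁₀ r)
  have hmaps : Set.MapsTo (fun r => (w r).1.toNat) (Finset.range q)
      (latticeIndicesIn (fib (l + 1)) (fib l) A A' B B') := by
    intro r hr
    have hr : (r : ℝ) + 1 ≤ q := by exact_mod_cast Finset.mem_range.mp hr
    have hx : (((w r).1.toNat : ℕ) : ℝ) = (w r).1 := by exact_mod_cast hcast r
    have hxA' : ((w r).1 : ℝ) ≤ A' := by nlinarith [(hw₁ r).2]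
    have hy := natCast_mul_mod_eq (m := fib (l + 1)) (c := fib l) (i := (w r).1.toNat)
      (by rw [hcast r]; exact hw r) (by exact_mod_cast hB.trans (hw₂ r).1)
      (by exact_mod_cast (hw₂ r).2.trans_lt (show B + (B' - B) < fib (l + 1) by linarith))
    have hy' : (((w r).1.toNat * fib l % fib (l + 1) : ℕ) : ℝ) = (w r).2 := by
      rw [← hy, Int.cast_natCast]
    simp only [latticeIndicesIn, Finset.coe_filter, Finset.mem_range, Set.mem_ofPred_eq, mem_Icc,
      hx, hy']
    refine ⟨?_, ⟨?_, hxA'⟩, (hw₂ r).1, by linarith [(hw₂ r).2]⟩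
    · exact_mod_cast (hx.trans_le hxA').trans_lt hA'
    · linarith [(hw₁ r).1, show 0 ≤ (r : ℝ) * δ by positivity]
  have hinj : Set.InjOn (fun r => (w r).1.toNat) (Finset.range q) := fun r _ r' _ h => by
    have : (w r).1 = (w r').1 := by rw [← hcast r, ← hcast r']; exact congrArg _ h
    rw [← hfloor r, ← hfloor r', this]
  simpa using Finset.card_le_card_of_injOn _ hmaps hinj

lemma fibLatticeCount_eq_card {k m n : ℕ} (hm : 0 < m) (hn : 0 < n) (x₁ x₂ y₁ y₂ : ℝ) :
    fibLatticeCount k m n x₁ x₂ y₁ y₂ = (latticeIndicesIn m (fib (k - 1))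
      (x₁ / (n / m)) (x₂ / (n / m)) (y₁ / (n / m)) (y₂ / (n / m))).card := by
  have hν : (0 : ℝ) < n / m := by positivity
  refine congrArg Finset.card (Finset.filter_congr fun i _ => ?_)
  simp only [mem_Icc, and_assoc, div_le_iff₀ hν, le_div_iff₀ hν, mul_comm _ ((n : ℝ) / m)]

lemma floor_three_mul_add_one_le_ceil {α : ℝ} (hα : 0 < α) : ⌊3 * α⌋₊ + 1 ≤ ⌈α / 6⁻¹⌉₊ := by
  rw [div_inv_eq_mul]
  rcases lt_or_ge (3 * α) 1 with h | h
  · rw [Nat.floor_eq_zero.mpr h]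
    exact Nat.one_le_iff_ne_zero.mpr (Nat.ceil_pos.mpr (by positivity)).ne'
  · have : (⌊3 * α⌋₊ : ℝ) + 1 ≤ ⌈α * 6⌉₊ := by
      linarith [Nat.floor_le (by positivity : 0 ≤ 3 * α), Nat.le_ceil (α * 6)]
    exact_mod_cast this

theorem stmt8 :
    ∃ a₁ a₂ : ℝ, a₂ ≤ a₁ ∧ 0 < a₂ ∧
      ∀ k m n : ℕ, 2 ≤ k → m = Nat.fib k → 0 < n → m ∣ n →
        ∀ α : ℝ, 0 < α →
          ∀ x₁ x₂ y₁ y₂ : ℝ, x₁ ≤ x₂ → y₁ ≤ y₂ →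
            0 ≤ x₁ → x₂ ≤ (n : ℝ) - (n : ℝ) / m →
            0 ≤ y₁ → y₂ ≤ (n : ℝ) - (n : ℝ) / m →
            (x₂ - x₁) * (y₂ - y₁) = α * (n : ℝ)^2 / m →
            ⌊α / a₁⌋₊ ≤ fibLatticeCount k m n x₁ x₂ y₁ y₂ ∧
              fibLatticeCount k m n x₁ x₂ y₁ y₂ ≤ ⌈α / a₂⌉₊ := by
  refine ⟨10, 6⁻¹, by norm_num, by norm_num, ?_⟩
  intro k m n hk hmk hn _ α hα x₁ x₂ y₁ y₂ _ hy hx₁ hx₂ hy₁ hy₂ harea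
  obtain ⟨l, rfl⟩ : ∃ l, k = l + 1 := ⟨k - 1, by omega⟩
  subst hmk
  have hm : (0 : ℝ) < fib (l + 1) := by exact_mod_cast Nat.fib_pos.mpr l.succ_pos
  have hn' : (0 : ℝ) < n := by exact_mod_cast hn
  rw [fibLatticeCount_eq_card (Nat.fib_pos.mpr l.succ_pos) hn, Nat.add_sub_cancel]
  set ν : ℝ := n / fib (l + 1) with hν_def
  have hν : 0 < ν := by positivity
  have hlt {x : ℝ} (h : x ≤ n - ν) : x / ν < fib (l + 1) := by
    rw [div_lt_iff₀ hν, hν_def, mul_div_cancel₀ _ hm.ne']; linarith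
  have harea' : (x₂ / ν - x₁ / ν) * (y₂ / ν - y₁ / ν) = α * fib (l + 1) := by
    rw [← sub_div, ← sub_div, div_mul_div_comm, harea, hν_def]; field_simp
  have hy' : y₁ / ν < y₂ / ν := by
    refine div_lt_div_of_pos_right (hy.lt_of_ne fun h => ?_) hν
    rw [h, sub_self, mul_zero] at harea
    exact (by positivity : 0 < α * (n : ℝ) ^ 2 / fib (l + 1)).ne harea
  refine ⟨le_card_latticeIndicesIn (by positivity) (hlt hx₂) (by positivity) hy'.le (hlt hy₂) ?_,
    (card_latticeIndicesIn_le hy').trans ?_⟩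
  · rw [harea']
    have := Nat.floor_le (by positivity : 0 ≤ α / 10)
    exact mul_le_mul_of_nonneg_right (by linarith) hm.le
  · rw [harea', ← mul_assoc, mul_div_cancel_right₀ _ hm.ne']
    exact floor_three_mul_add_one_le_ceil hα
end

section
/- Let Δ be a prime, let n and m be positive integers with m ≤ n, and let P be a set of m points in [0, n) × [0, n) ⊆ ℝ². Assume that for every α > 0, every axis-aligned rectangle contained in [0, n − n/m] × [0, n − n/m] of area α·n²/m contains at least ⌊α/1.9⌋ and at most ⌈α/0.45⌉ points of P. Let μ be a real number with n/m ≤ μ ≤ n such that n/μ and μ·m/n are positive integers, and let G be the grid on [0, n) × [0, n) whose cells are the rectangles [j·μ, (j+1)·μ) × [h·γ, (h+1)·γ) with γ = n²/(m·μ), 0 ≤ j < n/μ and 0 ≤ h < μ·m/n. Let Q' be a finite set of points in [0, n) × [0, n), and let h₀ be the number of grid cells of G that contain at least one point of Q'. Then there exists a subset Q ⊆ Q' with |Q| ≥ (h₀ − 6n/μ − 6μm/n)/16 such that the incidence vectors {inc_P(q) : q ∈ Q} are linearly independent in (ZMod Δ)^P. -/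
/-- The incidence vector of a query point `q` with respect to a finite point set `P`:
coordinate `p ∈ P` is `1` if `p` is dominated by `q` (i.e. `p.1 ≤ q.1` and `p.2 ≤ q.2`),
and `0` otherwise. -/
noncomputable def incVec (Δ : ℕ) (P : Finset (ℝ × ℝ)) (q : ℝ × ℝ) : P → ZMod Δ :=
  fun p => if p.1.1 ≤ q.1 ∧ p.1.2 ≤ q.2 then 1 else 0

/-!
Among the grid cells hit by `Q'`, keep at least a sixth, with columns agreeing modulo 2 and rows
agreeing modulo 3, then discard the cells in column 0 and the lowest kept cell of every column
(at most `a + b` cells, for `a` columns and `b` rows). For a remaining cell `c` let `c'` be the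
next kept cell below it in its column and let `q_c, q_c'` be points of `Q'` in these cells. The
rectangle one column to the left of `c`, between the rows of `c'` and `c`, has area at least
`2 n² / m`, so it contains a point `p_c ∈ P`, dominated by `q_c` but not by `q_c'`. Ordered by
column, the vectors `inc(q_c) - inc(q_c')` are triangular with respect to the points `p_c`, hence
independent; as they lie in the span of `inc(Q')`, some subset of `Q'` of at least that size has
independent incidence vectors.
-/

open Finset

theorem linearIndependent_of_triangular {R M ι β : Type*} [Ring R] [LinearOrder β]
    (v : ι → M → R) (p : ι → M) (κ : ι → β) (hdiag : ∀ i, v i (p i) = 1)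
    (hoff : ∀ i j, i ≠ j → κ i ≤ κ j → v i (p j) = 0) :
    LinearIndependent R v := by
  classical
  rw [linearIndependent_iff']
  intro s g hsum i hi
  by_contra hgi
  obtain ⟨j, hj, hjmax⟩ := exists_max_image {k ∈ s | g k ≠ 0} κ ⟨i, mem_filter.mpr ⟨hi, hgi⟩⟩
  obtain ⟨hjs, hgj⟩ := mem_filter.mp hj
  have hsum_at : (∑ k ∈ s, g k • v k) (p j) = g j := by
    rw [Finset.sum_apply, Finset.sum_eq_single_of_mem j hjs]
    · simp [hdiag]
    · intro k hks hkj
      by_cases hgk : g k = 0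
      · simp [hgk]
      · simp [hoff k j hkj (hjmax k (mem_filter.mpr ⟨hks, hgk⟩))]
  rw [hsum] at hsum_at
  exact hgj hsum_at.symm

theorem exists_subset_linearIndependent_card_le {K V A ι : Type*} [DivisionRing K]
    [AddCommGroup V] [Module K V] [Fintype ι] (s : Finset A) (f : A → V) (v : ι → V)
    (hv : LinearIndependent K v) (hvs : ∀ i, v i ∈ Submodule.span K (f '' s)) :
    ∃ t ⊆ s, Fintype.card ι ≤ #t ∧ LinearIndependent K (fun a : t => f a) := by
  obtain ⟨t, hts, -, hspan, hli⟩ :=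
    exists_linearIndepOn_extension (linearIndepOn_empty K f) (Set.empty_subset (s : Set A))
  lift t to Finset A using s.finite_toSet.subset hts
  refine ⟨t, mod_cast hts, ?_, hli⟩
  have hle : Submodule.span K (f '' s) ≤ Submodule.span K (f '' t) := Submodule.span_le.mpr hspan
  have hw : LinearIndependent K (fun i => (⟨v i, hle (hvs i)⟩ : Submodule.span K (f '' t))) :=
    .of_comp (Submodule.span K _).subtype hv
  have : FiniteDimensional K (Submodule.span K (f '' t)) :=
    .span_of_finite K (t.finite_toSet.image f)
  calc Fintype.card ι ≤ Module.finrank K (Submodule.span K (f '' t)) := hw.fintype_card_le_finrank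
    _ = #t := by rw [Set.image_eq_range, finrank_span_eq_card hli]; simp

theorem incVec_apply (Δ : ℕ) (P : Finset (ℝ × ℝ)) (q : ℝ × ℝ) (p : P) :
    incVec Δ P q p = if (p : ℝ × ℝ) ≤ q then 1 else 0 := by
  simp only [incVec, Prod.le_def]

theorem linearIndependent_incVec_sub {ι β : Type*} [LinearOrder β] (Δ : ℕ) (P : Finset (ℝ × ℝ))
    (κ : ι → β) (q q' w : ι → ℝ × ℝ) (hwP : ∀ i, w i ∈ P)
    (hdiag : ∀ i, w i ≤ q i ∧ ¬w i ≤ q' i)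
    (hoff : ∀ i j, i ≠ j → κ i ≤ κ j → (w j ≤ q i ↔ w j ≤ q' i)) :
    LinearIndependent (ZMod Δ) (fun i => incVec Δ P (q i) - incVec Δ P (q' i)) :=
  linearIndependent_of_triangular _ (fun i => ⟨w i, hwP i⟩) κ
    (fun i => by simp [incVec_apply, (hdiag i).1, (hdiag i).2])
    (fun i j hij hκ => by simp [incVec_apply, hoff i j hij hκ])

theorem Finset.exists_card_le_mul_card_fiber {α β : Type*} [DecidableEq β] {s : Finset α}
    {t : Finset β} {f : α → β} (hf : ∀ a ∈ s, f a ∈ t) (ht : t.Nonempty) :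
    ∃ y ∈ t, #s ≤ #t * #{x ∈ s | f x = y} :=
  exists_le_of_sum_le ht <| by
    rw [sum_const, smul_eq_mul, ← mul_sum, ← card_eq_sum_card_fiberwise hf]

theorem exists_subset_card_le_mul_emod_eq (S : Finset (ℤ × ℤ)) {r s : ℕ} (hr : 0 < r)
    (hs : 0 < s) : ∃ F ⊆ S, #S ≤ r * s * #F ∧
      ∀ c ∈ F, ∀ d ∈ F, c.1 % r = d.1 % r ∧ c.2 % s = d.2 % s := by
  obtain ⟨y, -, hy⟩ := exists_card_le_mul_card_fiber (f := fun c : ℤ × ℤ => (c.1 % r, c.2 % s))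
    (t := Ico 0 (r : ℤ) ×ˢ Ico 0 (s : ℤ))
    (fun c _ => by
      simp only [mem_product, mem_Ico]
      exact ⟨⟨Int.emod_nonneg _ (by omega), Int.emod_lt_of_pos _ (by omega)⟩,
        ⟨Int.emod_nonneg _ (by omega), Int.emod_lt_of_pos _ (by omega)⟩⟩)
    ⟨(0, 0), by simp [hr, hs]⟩
  refine ⟨_, filter_subset _ _, by simpa [card_product] using hy, fun c hc d hd => ?_⟩
  rw [mem_filter] at hc hd
  exact Prod.ext_iff.mp (hc.2.trans hd.2.symm)

theorem card_le_card_filter_exists_below_add {F : Finset (ℤ × ℤ)} {a b : ℕ}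
    (hF : F ⊆ Ico 0 (a : ℤ) ×ˢ Ico 0 (b : ℤ)) :
    #F ≤ #{c ∈ F | 0 < c.1 ∧ ∃ d ∈ F, d.1 = c.1 ∧ d.2 < c.2} + a + b := by
  classical
  have hgrid : ∀ c ∈ F, 0 ≤ c.1 ∧ c.1 < a ∧ 0 ≤ c.2 ∧ c.2 < b := fun c hc => by
    simpa [and_assoc] using hF hc
  have hlowest : #{c ∈ F | ∀ d ∈ F, d.1 = c.1 → c.2 ≤ d.2} ≤ a := by
    calc _ ≤ #(Ico 0 (a : ℤ)) := card_le_card_of_injOn Prod.fst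
            (fun c hc => by
              have := hgrid c (mem_filter.mp hc).1
              simp only [coe_Ico, Set.mem_Ico]; omega)
            (fun c hc d hd hcd => by
              simp only [mem_coe, mem_filter] at hc hd
              exact Prod.ext hcd (le_antisymm (hc.2 d hd.1 hcd.symm) (hd.2 c hc.1 hcd)))
      _ = a := by simp
  have hleft : #{c ∈ F | c.1 = 0} ≤ b := by
    calc _ ≤ #(Ico 0 (b : ℤ)) := card_le_card_of_injOn Prod.snd
            (fun c hc => by
              have := hgrid c (mem_filter.mp hc).1
              simp only [coe_Ico, Set.mem_Ico]; omega)
            (fun c hc d hd hcd => by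
              simp only [mem_coe, mem_filter] at hc hd
              exact Prod.ext (hc.2.trans hd.2.symm) hcd)
      _ = b := by simp
  have hrest : {c ∈ F | ¬(0 < c.1 ∧ ∃ d ∈ F, d.1 = c.1 ∧ d.2 < c.2)} ⊆
      {c ∈ F | ∀ d ∈ F, d.1 = c.1 → c.2 ≤ d.2} ∪ {c ∈ F | c.1 = 0} := by
    intro c hc
    simp only [mem_filter, mem_union, not_and, not_exists, not_lt] at hc ⊢
    have := hgrid c hc.1
    by_cases h0 : c.1 = 0
    · exact .inr ⟨hc.1, h0⟩
    · exact .inl ⟨hc.1, fun d hd hdc => hc.2 (by omega) d hd hdc⟩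
  have hsplit := F.card_filter_add_card_filter_not
    fun c => 0 < c.1 ∧ ∃ d ∈ F, d.1 = c.1 ∧ d.2 < c.2
  have := (card_le_card hrest).trans (card_union_le _ _)
  omega

/-- The cells `c ∈ E` carry the vectors `inc(q_c) - inc(q_{pr c})`; the spacing leaves room for a
witness rectangle between the rows of `pr c` and `c`, one column to the left of `c`. -/
structure SpacedCells (S E : Finset (ℤ × ℤ)) (pr : ℤ × ℤ → ℤ × ℤ) : Prop where
  subset : E ⊆ S
  pr_mem : ∀ c ∈ E, pr c ∈ S
  pr_fst : ∀ c ∈ E, (pr c).1 = c.1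
  pr_snd_add_three_le : ∀ c ∈ E, (pr c).2 + 3 ≤ c.2
  fst_pos : ∀ c ∈ E, 0 < c.1
  fst_add_two_le : ∀ c ∈ E, ∀ d ∈ E, d.1 < c.1 → d.1 + 2 ≤ c.1
  snd_le_pr_snd : ∀ c ∈ E, ∀ d ∈ E, d.1 = c.1 → d.2 < c.2 → d.2 ≤ (pr c).2

theorem exists_spacedCells {S : Finset (ℤ × ℤ)} {a b : ℕ}
    (hS : S ⊆ Ico 0 (a : ℤ) ×ˢ Ico 0 (b : ℤ)) :
    ∃ E pr, SpacedCells S E pr ∧ #S ≤ 6 * (#E + a + b) := by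
  classical
  obtain ⟨F, hFS, hSF, hFmod⟩ := exists_subset_card_le_mul_emod_eq S two_pos three_pos
  have hFE := card_le_card_filter_exists_below_add (hFS.trans hS)
  set E := {c ∈ F | 0 < c.1 ∧ ∃ d ∈ F, d.1 = c.1 ∧ d.2 < c.2}
  have hpred : ∀ c ∈ E, ∃ d ∈ F, d.1 = c.1 ∧ d.2 < c.2 ∧
      ∀ d' ∈ F, d'.1 = c.1 → d'.2 < c.2 → d'.2 ≤ d.2 := by
    intro c hc
    obtain ⟨-, -, hbelow⟩ := mem_filter.mp hc
    obtain ⟨d, hd, hdmax⟩ := exists_max_image {d ∈ F | d.1 = c.1 ∧ d.2 < c.2} Prod.snd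
      (by simpa [Finset.Nonempty] using hbelow)
    rw [mem_filter] at hd
    exact ⟨d, hd.1, hd.2.1, hd.2.2, fun d' hd' h1 h2 => hdmax d' (mem_filter.mpr ⟨hd', h1, h2⟩)⟩
  choose! pr hprF hpr_fst hpr_snd hpr_max using hpred
  have hEF : E ⊆ F := filter_subset _ _
  refine ⟨E, pr, ⟨hEF.trans hFS, fun c hc => hFS (hprF c hc), hpr_fst, fun c hc => ?_,
    fun c hc => (mem_filter.mp hc).2.1, fun c hc d hd hdc => ?_,
    fun c hc d hd h1 h2 => hpr_max c hc d (hEF hd) h1 h2⟩, by omega⟩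
  · have hrow_mod := (hFmod _ (hEF hc) _ (hprF c hc)).2
    have hbelow := hpr_snd c hc
    omega
  · have hcol_mod := (hFmod _ (hEF hc) _ (hEF hd)).1
    omega

noncomputable def cell (μ γ : ℝ) (q : ℝ × ℝ) : ℤ × ℤ := (⌊q.1 / μ⌋, ⌊q.2 / γ⌋)

def corner (μ γ : ℝ) (c : ℤ × ℤ) : ℝ × ℝ := (c.1 * μ, c.2 * γ)

section Grid

variable {μ γ : ℝ}

theorem corner_mono (hμ : 0 ≤ μ) (hγ : 0 ≤ γ) : Monotone (corner μ γ) := fun _ _ h =>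
  ⟨mul_le_mul_of_nonneg_right (mod_cast h.1) hμ, mul_le_mul_of_nonneg_right (mod_cast h.2) hγ⟩

theorem corner_cell_le (hμ : 0 < μ) (hγ : 0 < γ) (q : ℝ × ℝ) : corner μ γ (cell μ γ q) ≤ q :=
  ⟨(le_div_iff₀ hμ).1 (Int.floor_le _), (le_div_iff₀ hγ).1 (Int.floor_le _)⟩

theorem le_of_le_corner (hμ : 0 < μ) (hγ : 0 < γ) {p q : ℝ × ℝ} {c : ℤ × ℤ}
    (hp : p ≤ corner μ γ c) (hc : c ≤ cell μ γ q) : p ≤ q :=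
  hp.trans ((corner_mono hμ.le hγ.le hc).trans (corner_cell_le hμ hγ q))

theorem not_le_of_cell_fst_lt (hμ : 0 < μ) {p q : ℝ × ℝ} {j : ℤ} (hj : (cell μ γ q).1 < j)
    (hp : j * μ ≤ p.1) : ¬p ≤ q := fun h => by
  have hq : q.1 < ((cell μ γ q).1 + 1) * μ := (div_lt_iff₀ hμ).1 (Int.lt_floor_add_one _)
  have : ((cell μ γ q).1 + 1 : ℝ) ≤ j := mod_cast hj
  nlinarith [h.1]

theorem not_le_of_cell_snd_lt (hγ : 0 < γ) {p q : ℝ × ℝ} {k : ℤ} (hk : (cell μ γ q).2 < k)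
    (hp : k * γ ≤ p.2) : ¬p ≤ q := fun h => by
  have hq : q.2 < ((cell μ γ q).2 + 1) * γ := (div_lt_iff₀ hγ).1 (Int.lt_floor_add_one _)
  have : ((cell μ γ q).2 + 1 : ℝ) ≤ k := mod_cast hk
  nlinarith [h.2]

theorem cell_mem_Ico (hμ : 0 < μ) (hγ : 0 < γ) {a b : ℕ} {q : ℝ × ℝ} (hq : 0 ≤ q)
    (hqa : q.1 < a * μ) (hqb : q.2 < b * γ) :
    cell μ γ q ∈ Ico 0 (a : ℤ) ×ˢ Ico 0 (b : ℤ) := by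
  simp only [cell, mem_product, mem_Ico, Int.floor_nonneg, Int.floor_lt, Int.cast_natCast]
  exact ⟨⟨div_nonneg hq.1 hμ.le, (div_lt_iff₀ hμ).2 hqa⟩,
    ⟨div_nonneg hq.2 hγ.le, (div_lt_iff₀ hγ).2 hqb⟩⟩

end Grid

def MeetsRectangles (P : Finset (ℝ × ℝ)) (w h : ℝ) (R : ℝ × ℝ) : Prop :=
  ∀ x y : ℝ × ℝ, 0 ≤ x → y ≤ R → w ≤ y.1 - x.1 → h ≤ y.2 - x.2 → ∃ p ∈ P, p ∈ Set.Icc x y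

theorem MeetsRectangles.mono {P : Finset (ℝ × ℝ)} {w h : ℝ} {R R' : ℝ × ℝ}
    (hP : MeetsRectangles P w h R) (hR : R' ≤ R) : MeetsRectangles P w h R' :=
  fun x y hx hy => hP x y hx (hy.trans hR)

theorem meetsRectangles_of_floor_le_card {P : Finset (ℝ × ℝ)} {L U κ w h : ℝ} (hU : 0 < U)
    (hκ : 0 < κ)
    (hunif : ∀ α : ℝ, 0 < α → ∀ x₁ x₂ y₁ y₂ : ℝ, x₁ ≤ x₂ → y₁ ≤ y₂ → 0 ≤ x₁ → x₂ ≤ L →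
      0 ≤ y₁ → y₂ ≤ L → (x₂ - x₁) * (y₂ - y₁) = α * U →
      ⌊α / κ⌋₊ ≤ #{p ∈ P | x₁ ≤ p.1 ∧ p.1 ≤ x₂ ∧ y₁ ≤ p.2 ∧ p.2 ≤ y₂})
    (hw : 0 ≤ w) (hh : 0 ≤ h) (hwh : κ * U ≤ w * h) : MeetsRectangles P w h (L, L) := by
  intro x y hx hy hwx hhy
  set α := (y.1 - x.1) * (y.2 - x.2) / U
  have hκα : κ ≤ α := by
    rw [le_div_iff₀ hU]
    nlinarith [mul_le_mul hwx hhy hh (by linarith)]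
  have hcard := hunif α (by linarith) x.1 y.1 x.2 y.2 (by linarith) (by linarith) hx.1 hy.1 hx.2
    hy.2 (div_mul_cancel₀ _ hU.ne').symm
  have hone : 1 ≤ ⌊α / κ⌋₊ := Nat.le_floor (by rw [Nat.cast_one, le_div_iff₀ hκ]; linarith)
  obtain ⟨p, hp⟩ := card_pos.mp (hone.trans hcard)
  rw [mem_filter] at hp
  exact ⟨p, hp.1, ⟨hp.2.1, hp.2.2.2.1⟩, ⟨hp.2.2.1, hp.2.2.2.2⟩⟩

namespace SpacedCells

variable {μ γ : ℝ} {S E : Finset (ℤ × ℤ)} {pr : ℤ × ℤ → ℤ × ℤ}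

theorem exists_mem_Icc (hμ : 0 < μ) (hγ : 0 < γ) (hE : SpacedCells S E pr) {a b : ℕ}
    (hS : S ⊆ Ico 0 (a : ℤ) ×ˢ Ico 0 (b : ℤ)) {P : Finset (ℝ × ℝ)}
    (hP : MeetsRectangles P μ (2 * γ) (corner μ γ (a - 1, b - 1))) {c : ℤ × ℤ} (hc : c ∈ E) :
    ∃ p ∈ P, p ∈ Set.Icc (corner μ γ (c.1 - 1, (pr c).2 + 1)) (corner μ γ c) := by
  have hcS := mem_product.mp (hS (hE.subset hc))
  have hprS := mem_product.mp (hS (hE.pr_mem c hc))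
  simp only [mem_Ico] at hcS hprS
  have hgap : ((pr c).2 : ℝ) + 3 ≤ c.2 := mod_cast hE.pr_snd_add_three_le c hc
  refine hP _ _ ⟨?_, ?_⟩ (corner_mono hμ.le hγ.le ⟨?_, ?_⟩) ?_ ?_
  · exact mul_nonneg (mod_cast (by linarith [hE.fst_pos c hc] : (0 : ℤ) ≤ c.1 - 1)) hμ.le
  · exact mul_nonneg (mod_cast (by linarith : (0 : ℤ) ≤ (pr c).2 + 1)) hγ.le
  · change c.1 ≤ (a : ℤ) - 1; omega
  · change c.2 ≤ (b : ℤ) - 1; omega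
  · simp only [corner]; push_cast; linarith
  · simp only [corner]; push_cast; nlinarith

variable {rep wit : ℤ × ℤ → ℝ × ℝ}

theorem wit_le_rep (hμ : 0 < μ) (hγ : 0 < γ) (hE : SpacedCells S E pr)
    (hrep : ∀ c ∈ S, cell μ γ (rep c) = c)
    (hwit : ∀ c ∈ E, wit c ∈ Set.Icc (corner μ γ (c.1 - 1, (pr c).2 + 1)) (corner μ γ c))
    {c : ℤ × ℤ} (hc : c ∈ E) : wit c ≤ rep c ∧ ¬wit c ≤ rep (pr c) :=
  ⟨le_of_le_corner hμ hγ (hwit c hc).2 (hrep c (hE.subset hc)).ge,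
    not_le_of_cell_snd_lt hγ (by rw [hrep _ (hE.pr_mem c hc)]; omega) (hwit c hc).1.2⟩

theorem wit_le_rep_iff (hμ : 0 < μ) (hγ : 0 < γ) (hE : SpacedCells S E pr)
    (hrep : ∀ c ∈ S, cell μ γ (rep c) = c)
    (hwit : ∀ c ∈ E, wit c ∈ Set.Icc (corner μ γ (c.1 - 1, (pr c).2 + 1)) (corner μ γ c))
    {c d : ℤ × ℤ} (hc : c ∈ E) (hd : d ∈ E) (hne : d ≠ c) (hdc : d.1 ≤ c.1) :
    wit c ≤ rep d ↔ wit c ≤ rep (pr d) := by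
  have hrep_d := hrep d (hE.subset hd)
  have hrep_pr := hrep _ (hE.pr_mem d hd)
  have hpr_fst := hE.pr_fst d hd
  have hpr_snd := hE.pr_snd_add_three_le d hd
  rcases hdc.lt_or_eq with hlt | hcol
  · have hsep := hE.fst_add_two_le c hc d hd hlt
    exact iff_of_false
      (not_le_of_cell_fst_lt hμ (by rw [hrep_d]; omega) (hwit c hc).1.1)
      (not_le_of_cell_fst_lt hμ (by rw [hrep_pr]; omega) (hwit c hc).1.1)
  rcases lt_or_gt_of_ne (fun h => hne (Prod.ext hcol h)) with hbelow | habove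
  · have hd_le := hE.snd_le_pr_snd c hc d hd hcol hbelow
    exact iff_of_false
      (not_le_of_cell_snd_lt hγ (by rw [hrep_d]; omega) (hwit c hc).1.2)
      (not_le_of_cell_snd_lt hγ (by rw [hrep_pr]; omega) (hwit c hc).1.2)
  · have hc_le := hE.snd_le_pr_snd d hd c hc hcol.symm habove
    exact iff_of_true
      (le_of_le_corner hμ hγ (hwit c hc).2 (by rw [hrep_d]; exact ⟨hcol.ge, habove.le⟩))
      (le_of_le_corner hμ hγ (hwit c hc).2 (by rw [hrep_pr]; exact ⟨by omega, hc_le⟩))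

end SpacedCells

theorem exists_linearIndependent_incVec_of_meetsRectangles (Δ : ℕ) [Fact Δ.Prime]
    {P : Finset (ℝ × ℝ)} {μ γ : ℝ} (hμ : 0 < μ) (hγ : 0 < γ) {a b : ℕ}
    (hP : MeetsRectangles P μ (2 * γ) (corner μ γ (a - 1, b - 1))) (Q' : Finset (ℝ × ℝ))
    (hQ' : ∀ q ∈ Q', cell μ γ q ∈ Ico 0 (a : ℤ) ×ˢ Ico 0 (b : ℤ)) :
    ∃ Q ⊆ Q', #(Q'.image (cell μ γ)) ≤ 6 * (#Q + a + b) ∧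
      LinearIndependent (ZMod Δ) (fun q : Q => incVec Δ P q) := by
  set S := Q'.image (cell μ γ)
  have hS : S ⊆ Ico 0 (a : ℤ) ×ˢ Ico 0 (b : ℤ) := image_subset_iff.mpr hQ'
  obtain ⟨E, pr, hE, hSE⟩ := exists_spacedCells hS
  have hrep : ∀ c ∈ S, ∃ q ∈ Q', cell μ γ q = c := fun c hc => mem_image.mp hc
  choose! rep hrepQ' hrep using hrep
  have hwit : ∀ c ∈ E, ∃ p ∈ P, p ∈ Set.Icc (corner μ γ (c.1 - 1, (pr c).2 + 1)) (corner μ γ c) :=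
    fun c hc => hE.exists_mem_Icc hμ hγ hS hP hc
  choose! wit hwitP hwit using hwit
  have hli := linearIndependent_incVec_sub Δ P (fun c : E => c.1.1) (fun c => rep c)
    (fun c => rep (pr c)) (fun c => wit c) (fun c => hwitP c c.2)
    (fun c => hE.wit_le_rep hμ hγ hrep hwit c.2)
    (fun d c hne hdc => hE.wit_le_rep_iff hμ hγ hrep hwit c.2 d.2
      (Subtype.coe_ne_coe.mpr hne) hdc)
  obtain ⟨Q, hQ, hQcard, hQli⟩ := exists_subset_linearIndependent_card_le Q' (incVec Δ P) _ hli
    (fun c => sub_mem (Submodule.subset_span ⟨_, hrepQ' _ (hE.subset c.2), rfl⟩)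
      (Submodule.subset_span ⟨_, hrepQ' _ (hE.pr_mem _ c.2), rfl⟩))
  refine ⟨Q, hQ, ?_, hQli⟩
  rw [Fintype.card_coe] at hQcard
  omega

theorem stmt9_general (Δ : ℕ) (hΔ : Δ.Prime) (n m : ℕ) (hn : 0 < n) (hm : 0 < m)
    (P : Finset (ℝ × ℝ))
    -- the uniformity assumption on `P` (as for the scaled Fibonacci lattice):
    (hunif : ∀ α : ℝ, 0 < α →
      ∀ x₁ x₂ y₁ y₂ : ℝ, x₁ ≤ x₂ → y₁ ≤ y₂ →
        0 ≤ x₁ → x₂ ≤ (n : ℝ) - (n : ℝ) / m →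
        0 ≤ y₁ → y₂ ≤ (n : ℝ) - (n : ℝ) / m →
        (x₂ - x₁) * (y₂ - y₁) = α * (n : ℝ)^2 / m →
        ⌊α / 1.9⌋₊ ≤ (P.filter (fun p => x₁ ≤ p.1 ∧ p.1 ≤ x₂ ∧ y₁ ≤ p.2 ∧ p.2 ≤ y₂)).card ∧
          (P.filter (fun p => x₁ ≤ p.1 ∧ p.1 ≤ x₂ ∧ y₁ ≤ p.2 ∧ p.2 ≤ y₂)).card ≤ ⌈α / 0.45⌉₊)
    (μ γ : ℝ) (hμ₁ : (n : ℝ) / m ≤ μ) (hμ₂ : μ ≤ (n : ℝ))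
    (hγ : γ = (n : ℝ)^2 / (m * μ))
    (hcols : ∃ a : ℕ, 0 < a ∧ (a : ℝ) = (n : ℝ) / μ)
    (hrows : ∃ b : ℕ, 0 < b ∧ (b : ℝ) = μ * m / n)
    (Q' : Finset (ℝ × ℝ))
    (hQ'range : ∀ q ∈ Q', 0 ≤ q.1 ∧ q.1 < (n : ℝ) ∧ 0 ≤ q.2 ∧ q.2 < (n : ℝ))
    -- `h₀` is the hitting number of `Q'` on the grid with width `μ` and height `γ`:
    (h₀ : ℕ) (hh₀ : h₀ = (Q'.image (fun q => (⌊q.1 / μ⌋, ⌊q.2 / γ⌋))).card) :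
    ∃ Q ⊆ Q', ((h₀ : ℝ) - 6 * n / μ - 6 * μ * m / n) / 16 ≤ (Q.card : ℝ) ∧
      LinearIndependent (ZMod Δ) (fun q : Q => incVec Δ P q.1) := by
  have := Fact.mk hΔ
  obtain ⟨a, -, ha⟩ := hcols
  obtain ⟨b, -, hb⟩ := hrows
  have hμ : 0 < μ := lt_of_lt_of_le (by positivity) hμ₁
  have hγ₀ : 0 < γ := by rw [hγ]; positivity
  have haμ : (a : ℝ) * μ = n := by rw [ha]; field_simp
  have hbγ : (b : ℝ) * γ = n := by rw [hb, hγ]; field_simp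
  have hμγ : μ * γ = (n : ℝ) ^ 2 / m := by rw [hγ]; field_simp
  have hγ₁ : (n : ℝ) / m ≤ γ := by
    rw [hγ, div_le_div_iff₀ (by positivity) (by positivity)]
    nlinarith [mul_le_mul_of_nonneg_left hμ₂ (by positivity : (0 : ℝ) ≤ n * m)]
  have hP : MeetsRectangles P μ (2 * γ) (n - n / m, n - n / m) :=
    meetsRectangles_of_floor_le_card (U := (n : ℝ) ^ 2 / m) (by positivity) (by norm_num)
      (fun α hα x₁ x₂ y₁ y₂ h₁ h₂ h₃ h₄ h₅ h₆ harea =>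
        (hunif α hα x₁ x₂ y₁ y₂ h₁ h₂ h₃ h₄ h₅ h₆ (by rw [harea, mul_div_assoc])).1)
      hμ.le (by positivity) (by nlinarith [hμγ, (by positivity : (0 : ℝ) < n ^ 2 / m)])
  have hP_grid : MeetsRectangles P μ (2 * γ) (corner μ γ (a - 1, b - 1)) :=
    hP.mono ⟨by simp only [corner]; push_cast; linarith, by simp only [corner]; push_cast; linarith⟩
  obtain ⟨Q, hQ, hcard, hli⟩ :=
    exists_linearIndependent_incVec_of_meetsRectangles Δ hμ hγ₀ hP_grid Q'
      (fun q hq => have hq' := hQ'range q hq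
        cell_mem_Ico hμ hγ₀ ⟨hq'.1, hq'.2.2.1⟩ (haμ ▸ hq'.2.1) (hbγ ▸ hq'.2.2.2))
  refine ⟨Q, hQ, ?_, hli⟩
  have hh₀Q : (h₀ : ℝ) ≤ 6 * (Q.card + a + b) := by rw [hh₀]; exact_mod_cast hcard
  rw [mul_div_assoc, mul_assoc, mul_div_assoc, ← ha, ← hb]
  linarith [(Q.card.cast_nonneg : (0 : ℝ) ≤ Q.card)]

theorem stmt9 (Δ : ℕ) (hΔ : Δ.Prime) (n m : ℕ) (hn : 0 < n) (hm : 0 < m) (hmn : m ≤ n)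
    (P : Finset (ℝ × ℝ)) (hPcard : P.card = m)
    (hPrange : ∀ p ∈ P, 0 ≤ p.1 ∧ p.1 < (n : ℝ) ∧ 0 ≤ p.2 ∧ p.2 < (n : ℝ))
    -- the uniformity assumption on `P` (as for the scaled Fibonacci lattice):
    (hunif : ∀ α : ℝ, 0 < α →
      ∀ x₁ x₂ y₁ y₂ : ℝ, x₁ ≤ x₂ → y₁ ≤ y₂ →
        0 ≤ x₁ → x₂ ≤ (n : ℝ) - (n : ℝ) / m →
        0 ≤ y₁ → y₂ ≤ (n : ℝ) - (n : ℝ) / m →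
        (x₂ - x₁) * (y₂ - y₁) = α * (n : ℝ)^2 / m →
        ⌊α / 1.9⌋₊ ≤ (P.filter (fun p => x₁ ≤ p.1 ∧ p.1 ≤ x₂ ∧ y₁ ≤ p.2 ∧ p.2 ≤ y₂)).card ∧
          (P.filter (fun p => x₁ ≤ p.1 ∧ p.1 ≤ x₂ ∧ y₁ ≤ p.2 ∧ p.2 ≤ y₂)).card ≤ ⌈α / 0.45⌉₊)
    (μ γ : ℝ) (hμ₁ : (n : ℝ) / m ≤ μ) (hμ₂ : μ ≤ (n : ℝ))
    (hγ : γ = (n : ℝ)^2 / (m * μ))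
    (hcols : ∃ a : ℕ, 0 < a ∧ (a : ℝ) = (n : ℝ) / μ)
    (hrows : ∃ b : ℕ, 0 < b ∧ (b : ℝ) = μ * m / n)
    (Q' : Finset (ℝ × ℝ))
    (hQ'range : ∀ q ∈ Q', 0 ≤ q.1 ∧ q.1 < (n : ℝ) ∧ 0 ≤ q.2 ∧ q.2 < (n : ℝ))
    -- `h₀` is the hitting number of `Q'` on the grid with width `μ` and height `γ`:
    (h₀ : ℕ) (hh₀ : h₀ = (Q'.image (fun q => (⌊q.1 / μ⌋, ⌊q.2 / γ⌋))).card) :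
    ∃ Q ⊆ Q', ((h₀ : ℝ) - 6 * n / μ - 6 * μ * m / n) / 16 ≤ (Q.card : ℝ) ∧
      LinearIndependent (ZMod Δ) (fun q : Q => incVec Δ P q.1) :=
  stmt9_general Δ hΔ n m hn hm P hunif μ γ hμ₁ hμ₂ hγ hcols hrows Q' hQ'range h₀ hh₀
end

section
/- Let n, m, s be positive integers with m dividing n, and set W = n/m and A = n²/(m·s²) (a real number). Let q₀, …, q_{m−1} be independent random points, where q_h = (x_h, y_h) is uniformly distributed on the integer grid {h·W, h·W+1, …, (h+1)·W − 1} × {0, 1, …, n−1}. Call q_h well-separated if for every k ≠ h one has |x_h − x_k| · |y_h − y_k| > A. Then for every h ∈ {0, …, m−1}, the probability that q_h is not well-separated is at most 2/s + 3/W + Σ_{k≠h} 2/((|k−h|−1)·s² + s). -/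
/-- The sample space of `m` independent points, where the `h`-th point is uniform on the
`h`-th vertical slab `{h·W, …, (h+1)·W − 1} × {0, …, n−1}` of integer points. -/
def slabSpace (n m W : ℕ) : Finset (Fin m → ℕ × ℕ) :=
  Fintype.piFinset fun h => (Finset.Ico ((h : ℕ) * W) (((h : ℕ) + 1) * W)) ×ˢ Finset.range n

/-- The point `q h` is well-separated (w.r.t. the area threshold `A`) if for every `k ≠ h`
the smallest axis-aligned rectangle containing `q h` and `q k` has area exceeding `A`,
i.e. `|x_h − x_k| · |y_h − y_k| > A`. -/
def wellSep {m : ℕ} (A : ℝ) (q : Fin m → ℕ × ℕ) (h : Fin m) : Prop :=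
  ∀ k : Fin m, k ≠ h →
    A < ((|((q h).1 : ℤ) - ((q k).1 : ℤ)| * |((q h).2 : ℤ) - ((q k).2 : ℤ)| : ℤ) : ℝ)

/-!
If `q_h` lies at horizontal distance at least `W / s` from both neighbouring slabs (which fails
with probability at most `2 / s`), then its horizontal distance to `q_k` is at least
`D_k = (|k - h| - 1) W + W / s`. A rectangle of area at most `A` then forces
`|y_h - y_k| ≤ A / D_k`, an event of probability at most `(2 A / D_k + 1) / n`, and with
`n = m W` this is `2 / ((|k - h| - 1) s² + s) + 1 / n`. A union bound over `k` finishes the proof;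
the `m - 1` error terms `1 / n` add up to at most `1 / W`.
-/

open Finset

/-- The probability of `P` under the uniform distribution on `S` (`0` if `S = ∅`). -/
noncomputable def uniformProb {α : Type*} (S : Finset α) (P : α → Prop) : ℝ := by
  classical exact #{a ∈ S | P a} / #S

section UniformProb

variable {α β ι : Type*}

lemma uniformProb_eq (S : Finset α) (P : α → Prop) [DecidablePred P] :
    uniformProb S P = (#{a ∈ S | P a} : ℝ) / #S := by
  unfold uniformProb
  congr 3
  exact filter_congr_decidable ..

lemma uniformProb_mono {S : Finset α} {P Q : α → Prop} (h : ∀ a ∈ S, P a → Q a) :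
    uniformProb S P ≤ uniformProb S Q := by
  classical
  rw [uniformProb_eq, uniformProb_eq]
  gcongr with a ha
  exact h a ha

lemma uniformProb_or_le (S : Finset α) (P Q : α → Prop) :
    uniformProb S (fun a => P a ∨ Q a) ≤ uniformProb S P + uniformProb S Q := by
  classical
  simp only [uniformProb_eq, ← add_div, filter_or]
  gcongr
  exact_mod_cast card_union_le _ _

lemma uniformProb_exists_le (S : Finset α) (I : Finset ι) (P : ι → α → Prop) :
    uniformProb S (fun a => ∃ i ∈ I, P i a) ≤ ∑ i ∈ I, uniformProb S (P i) := by
  classical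
  simp only [uniformProb_eq, ← sum_div]
  gcongr
  rw [← Nat.cast_sum, Nat.cast_le]
  calc #{a ∈ S | ∃ i ∈ I, P i a} = #(I.biUnion fun i => {a ∈ S | P i a}) := by
        congr 1; ext a; simp only [mem_filter, mem_biUnion]; tauto
    _ ≤ _ := card_biUnion_le

/-- Only `≤`, because `c = 0` is allowed. -/
lemma uniformProb_comp_le [DecidableEq β] {S : Finset α} {T : Finset β} {g : α → β}
    (hg : ∀ a ∈ S, g a ∈ T) {c : ℕ} (hc : ∀ b ∈ T, #{a ∈ S | g a = b} = c)
    (P : β → Prop) :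
    uniformProb S (fun a => P (g a)) ≤ uniformProb T P := by
  classical
  have hcount (Q : β → Prop) [DecidablePred Q] :
      #{a ∈ S | Q (g a)} = #{b ∈ T | Q b} * c := by
    rw [card_eq_sum_card_fiberwise (f := g) (t := {b ∈ T | Q b})
      fun a ha => by simp_all only [coe_filter, Set.mem_ofPred_eq, and_true]]
    refine sum_const_nat fun b hb => ?_
    rw [mem_filter] at hb
    rw [filter_filter, ← hc b hb.1]
    congr 1
    exact filter_congr fun a _ => ⟨And.right, fun h => ⟨h ▸ hb.2, h⟩⟩
  have hS : #S = #T * c := by simpa using hcount (fun _ => True)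
  rw [uniformProb_eq, uniformProb_eq, hcount P, hS]
  rcases Nat.eq_zero_or_pos c with rfl | hc0
  · simp only [mul_zero, Nat.cast_zero, div_zero]
    positivity
  · push_cast
    rw [mul_div_mul_right _ _ (by positivity)]

end UniformProb

section Pi

variable {ι : Type*} [Fintype ι] [DecidableEq ι] {δ : ι → Type*} [∀ i, DecidableEq (δ i)]

lemma uniformProb_piFinset_apply_le (s : ∀ i, Finset (δ i)) (i : ι) (P : δ i → Prop) :
    uniformProb (Fintype.piFinset s) (fun f => P (f i)) ≤ uniformProb (s i) P :=
  uniformProb_comp_le (fun _ hf => Fintype.mem_piFinset.1 hf i)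
    (fun _ ha => Fintype.card_filter_piFinset_eq_of_mem s i ha) P

lemma card_filter_piFinset_apply₂_eq (s : ∀ i, Finset (δ i)) {i j : ι} (hij : i ≠ j)
    {a : δ i} {b : δ j} (ha : a ∈ s i) (hb : b ∈ s j) :
    #{f ∈ Fintype.piFinset s | (f i, f j) = (a, b)}
      = ∏ l ∈ (univ.erase j).erase i, #(s l) := by
  have hfib : {f ∈ Fintype.piFinset s | (f i, f j) = (a, b)}
      = {f ∈ Fintype.piFinset (Function.update s i {a}) | f j = b} := by
    rw [Fintype.piFinset_update_singleton_eq_filter_piFinset_eq _ _ ha, filter_filter]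
    simp only [Prod.mk.injEq]
  rw [hfib, Fintype.card_filter_piFinset_eq_of_mem _ _ (by rwa [Function.update_of_ne hij.symm]),
    ← mul_prod_erase _ _ (mem_erase.2 ⟨hij, mem_univ i⟩), Function.update_self,
    card_singleton, one_mul]
  exact prod_congr rfl fun l hl => by rw [Function.update_of_ne (ne_of_mem_erase hl)]

lemma uniformProb_piFinset_apply₂_le (s : ∀ i, Finset (δ i)) {i j : ι} (hij : i ≠ j)
    (P : δ i → δ j → Prop) :
    uniformProb (Fintype.piFinset s) (fun f => P (f i) (f j))
      ≤ uniformProb (s i ×ˢ s j) (fun p => P p.1 p.2) := by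
  refine uniformProb_comp_le (S := Fintype.piFinset s) (T := s i ×ˢ s j)
    (g := fun f => (f i, f j)) (c := ∏ l ∈ (univ.erase j).erase i, #(s l)) ?_ ?_
    (fun p => P p.1 p.2)
  · intro f hf
    exact mem_product.2 ⟨Fintype.mem_piFinset.1 hf i, Fintype.mem_piFinset.1 hf j⟩
  · rintro ⟨a, b⟩ hab
    exact card_filter_piFinset_apply₂_eq s hij (mem_product.1 hab).1 (mem_product.1 hab).2

end Pi

lemma uniformProb_product_fst_le {α β : Type*} [DecidableEq α] (s : Finset α) (t : Finset β)
    (P : α → Prop) : uniformProb (s ×ˢ t) (fun p => P p.1) ≤ uniformProb s P := by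
  refine uniformProb_comp_le (S := s ×ˢ t) (T := s) (g := Prod.fst) (c := #t)
    (fun p hp => (mem_product.1 hp).1) (fun a ha => ?_) P
  rw [filter_product_left (· = a), card_product, filter_eq' s a, if_pos ha, card_singleton,
    one_mul]

lemma uniformProb_product_snd_snd_le {α β γ δ : Type*} [DecidableEq β] [DecidableEq δ]
    (s : Finset α) (t : Finset β) (s' : Finset γ) (t' : Finset δ) (P : β → δ → Prop) :
    uniformProb ((s ×ˢ t) ×ˢ (s' ×ˢ t')) (fun p => P p.1.2 p.2.2)
      ≤ uniformProb (t ×ˢ t') (fun p => P p.1 p.2) := by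
  classical
  refine uniformProb_comp_le (S := (s ×ˢ t) ×ˢ (s' ×ˢ t')) (T := t ×ˢ t')
    (g := fun p => (p.1.2, p.2.2)) (c := #s * #s') ?_ ?_ (fun p => P p.1 p.2)
  · intro p hp
    simp only [mem_product] at hp ⊢
    exact ⟨hp.1.2, hp.2.2⟩
  · rintro ⟨b, d⟩ hbd
    rw [mem_product] at hbd
    have : {p ∈ (s ×ˢ t) ×ˢ (s' ×ˢ t') | (p.1.2, p.2.2) = (b, d)}
        = (s ×ˢ {b}) ×ˢ (s' ×ˢ {d}) := by
      ext ⟨⟨a, b'⟩, c, d'⟩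
      simp only [mem_filter, mem_product, mem_singleton, Prod.mk.injEq]
      constructor
      · rintro ⟨⟨⟨ha, -⟩, hc, -⟩, rfl, rfl⟩; exact ⟨⟨ha, rfl⟩, hc, rfl⟩
      · rintro ⟨⟨ha, rfl⟩, hc, rfl⟩; exact ⟨⟨⟨ha, hbd.1⟩, hc, hbd.2⟩, rfl, rfl⟩
    rw [this, card_product, card_product, card_product, card_singleton, card_singleton,
      mul_one, mul_one]

lemma uniformProb_abs_sub_le (n : ℕ) {r : ℝ} (hr : 0 ≤ r) :
    uniformProb (range n ×ˢ range n) (fun p => |(p.1 : ℝ) - p.2| ≤ r)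
      ≤ (2 * r + 1) / n := by
  classical
  set t := ⌊r⌋₊
  set band := {p ∈ range n ×ˢ range n | |(p.1 : ℝ) - p.2| ≤ r}
  have hfiber : ∀ v ∈ range n, #{p ∈ band | p.2 = v} ≤ 2 * t + 1 := by
    intro v _
    calc _ ≤ #(Icc (-(t : ℤ)) t) := by
          refine card_le_card_of_injOn (fun p => (p.1 : ℤ) - v) ?_ ?_
          · intro p hp
            simp only [band, coe_filter, mem_filter, Set.mem_ofPred_eq] at hp
            obtain ⟨⟨-, hpr⟩, rfl⟩ := hp
            have : ((p.1 : ℤ) - p.2).natAbs ≤ t := Nat.le_floor <| by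
              rw [Nat.cast_natAbs, Int.cast_abs]; push_cast; exact hpr
            simp only [coe_Icc, Set.mem_Icc]
            omega
          · intro p hp q hq hpq
            simp only [band, coe_filter, mem_filter, Set.mem_ofPred_eq] at hp hq
            simp only at hpq
            exact Prod.ext (by omega) (hp.2.trans hq.2.symm)
      _ = 2 * t + 1 := by simp; omega
  have hcard : #band ≤ n * (2 * t + 1) := by
    rw [card_eq_sum_card_fiberwise (f := Prod.snd) (t := range n)
      (fun p hp => (mem_product.1 (mem_filter.1 hp).1).2)]
    simpa using sum_le_sum hfiber
  rw [uniformProb_eq, card_product, card_range]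
  rcases n.eq_zero_or_pos with rfl | hn
  · simp
  rw [div_le_div_iff₀ (by positivity) (by positivity)]
  have ht : (t : ℝ) ≤ r := Nat.floor_le hr
  calc (#band : ℝ) * n
      ≤ n * (2 * t + 1) * n := by gcongr; exact_mod_cast hcard
    _ ≤ (2 * r + 1) * (n * n : ℕ) := by push_cast; nlinarith

/-- `slabSpace n m W` is `Fintype.piFinset (slab n W ·)` by definition. -/
def slab (n W i : ℕ) : Finset (ℕ × ℕ) := Ico (i * W) ((i + 1) * W) ×ˢ range n

/-- `x + 1 - i * W` and `(i + 1) * W - x` are the horizontal distances from `x` to the last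
column of slab `i - 1` and to the first column of slab `i + 1`. -/
def IsFarFromSlabEdges (W s i x : ℕ) : Prop :=
  W ≤ s * (x + 1 - i * W) ∧ W ≤ s * ((i + 1) * W - x)

lemma card_mul_le_of_injOn {α : Type*} {A : Finset α} {f : α → ℕ} {s W : ℕ} (hs : 0 < s)
    (hf : Set.InjOn f A) (hA : ∀ x ∈ A, s * (f x + 1) < W) : #A * s ≤ W := by
  have hcard : #A ≤ (W - 1) / s := by
    simpa using card_le_card_of_injOn (t := range ((W - 1) / s)) f (fun x hx => by
      have := hA x hx
      rw [Nat.mul_comm] at this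
      exact mem_range.2 ((Nat.le_div_iff_mul_le hs).2 (show (f x + 1) * s ≤ W - 1 by omega))) hf
  calc #A * s ≤ (W - 1) / s * s := Nat.mul_le_mul_right s hcard
    _ ≤ W := (Nat.div_mul_le_self _ _).trans (Nat.sub_le W 1)

lemma uniformProb_le_one_div_of_injOn {α : Type*} {S : Finset α} {P : α → Prop} {s : ℕ}
    (hs : 0 < s) (f : α → ℕ) (hf : Set.InjOn f {x | x ∈ S ∧ P x})
    (hP : ∀ x ∈ S, P x → s * (f x + 1) < #S) : uniformProb S P ≤ 1 / s := by
  classical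
  have hcard : #{x ∈ S | P x} * s ≤ #S :=
    card_mul_le_of_injOn hs (by simpa using hf) fun x hx =>
      hP x (mem_filter.1 hx).1 (mem_filter.1 hx).2
  rw [uniformProb_eq]
  rcases (#S).eq_zero_or_pos with hS | hS
  · simp [hS]
  rw [div_le_div_iff₀ (by exact_mod_cast hS) (by exact_mod_cast hs), one_mul]
  exact_mod_cast hcard

lemma uniformProb_not_isFarFromSlabEdges_le {W s : ℕ} (i : ℕ) (hs : 0 < s) :
    uniformProb (Ico (i * W) ((i + 1) * W)) (fun x => ¬ IsFarFromSlabEdges W s i x) ≤ 2 / s := by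
  have hcard : #(Ico (i * W) ((i + 1) * W)) = W := by simp [add_one_mul]
  calc _ ≤ uniformProb (Ico (i * W) ((i + 1) * W))
        (fun x => s * (x + 1 - i * W) < W ∨ s * ((i + 1) * W - x) < W) :=
        uniformProb_mono fun x _ hx => by unfold IsFarFromSlabEdges at hx; omega
    _ ≤ 1 / s + 1 / s := by
      refine (uniformProb_or_le _ _ _).trans (add_le_add ?_ ?_)
      · refine uniformProb_le_one_div_of_injOn hs (fun x => x - i * W) ?_ ?_
        · intro x hx y hy hxy
          simp only [Set.mem_ofPred_eq, mem_Ico] at hx hy hxy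
          omega
        · intro x hx hP
          rw [mem_Ico] at hx
          rwa [hcard, show x - i * W + 1 = x + 1 - i * W by omega]
      · refine uniformProb_le_one_div_of_injOn hs (fun x => (i + 1) * W - 1 - x) ?_ ?_
        · intro x hx y hy hxy
          simp only [Set.mem_ofPred_eq, mem_Ico] at hx hy hxy
          omega
        · intro x hx hP
          rw [mem_Ico] at hx
          rwa [hcard, show (i + 1) * W - 1 - x + 1 = (i + 1) * W - x by omega]
    _ = 2 / s := by ring

lemma IsFarFromSlabEdges.le_abs_sub {W s i k x u : ℕ} (hfar : IsFarFromSlabEdges W s i x)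
    (hs : 0 < s) (hik : i ≠ k) (hx : x ∈ Ico (i * W) ((i + 1) * W))
    (hu : u ∈ Ico (k * W) ((k + 1) * W)) :
    (|(k : ℝ) - i| - 1) * W + W / s ≤ |(x : ℝ) - u| := by
  rw [mem_Ico] at hx hu
  have hs' : (0 : ℝ) < s := by exact_mod_cast hs
  rcases Nat.lt_or_gt_of_ne hik with hlt | hgt
  · have hgap : (W : ℝ) / s ≤ (i + 1) * W - x := by
      have := (Nat.cast_le (α := ℝ)).2 hfar.2
      push_cast [Nat.cast_sub hx.2.le] at this
      rwa [div_le_iff₀' hs']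
    have hu' : (k : ℝ) * W ≤ u := by exact_mod_cast hu.1
    rw [abs_of_pos (sub_pos.2 (by exact_mod_cast hlt))]
    exact le_abs.2 (Or.inr (by linarith))
  · have hgap : (W : ℝ) / s ≤ x + 1 - i * W := by
      have := (Nat.cast_le (α := ℝ)).2 hfar.1
      push_cast [Nat.cast_sub (show i * W ≤ x + 1 by omega)] at this
      rwa [div_le_iff₀' hs']
    have hu' : (u : ℝ) + 1 ≤ (k + 1) * W := by exact_mod_cast hu.2
    rw [abs_sub_comm, abs_of_pos (sub_pos.2 (by exact_mod_cast hgt))]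
    exact le_abs.2 (Or.inl (by linarith))

lemma one_le_abs_natCast_sub_of_ne {i k : ℕ} (hik : i ≠ k) : (1 : ℝ) ≤ |(k : ℝ) - i| := by
  have : (1 : ℤ) ≤ |(k : ℤ) - i| :=
    Int.one_le_abs (sub_ne_zero.2 (by exact_mod_cast hik.symm))
  exact_mod_cast this

lemma uniformProb_slab_pair_le {n W s i k : ℕ} (hW : 0 < W) (hs : 0 < s) (hik : i ≠ k)
    {A : ℝ} (hA : 0 ≤ A) :
    uniformProb (slab n W i ×ˢ slab n W k) (fun p => IsFarFromSlabEdges W s i p.1.1 ∧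
        ((|(p.1.1 : ℤ) - p.2.1| * |(p.1.2 : ℤ) - p.2.2| : ℤ) : ℝ) ≤ A)
      ≤ (2 * (A / ((|(k : ℝ) - i| - 1) * W + W / s)) + 1) / n := by
  set D := (|(k : ℝ) - i| - 1) * W + W / s
  have hD : 0 < D := by
    have hki := one_le_abs_natCast_sub_of_ne hik
    exact add_pos_of_nonneg_of_pos (mul_nonneg (by linarith) W.cast_nonneg) (by positivity)
  calc _ ≤ uniformProb (slab n W i ×ˢ slab n W k)
        (fun p => |(p.1.2 : ℝ) - p.2.2| ≤ A / D) := by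
        refine uniformProb_mono fun ⟨⟨x, y⟩, ⟨u, v⟩⟩ hp ⟨hfar, hxy⟩ => ?_
        simp only [slab, mem_product] at hp
        have hgap : D ≤ |(x : ℝ) - u| := hfar.le_abs_sub hs hik hp.1.1 hp.2.1
        push_cast at hxy
        rw [le_div_iff₀ hD]
        nlinarith [abs_nonneg ((y : ℝ) - v)]
    _ ≤ uniformProb (range n ×ˢ range n) (fun p => |(p.1 : ℝ) - p.2| ≤ A / D) :=
        uniformProb_product_snd_snd_le (Ico (i * W) ((i + 1) * W)) (range n)
          (Ico (k * W) ((k + 1) * W)) (range n) fun y v => |(y : ℝ) - v| ≤ A / D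
    _ ≤ _ := uniformProb_abs_sub_le n (div_nonneg hA hD.le)

lemma uniformProb_slabSpace_not_isFarFromSlabEdges_le {n m W s : ℕ} (hs : 0 < s) (h : Fin m) :
    uniformProb (slabSpace n m W) (fun q => ¬ IsFarFromSlabEdges W s h (q h).1) ≤ 2 / s :=
  calc _ ≤ uniformProb (slab n W h) (fun a => ¬ IsFarFromSlabEdges W s h a.1) :=
        uniformProb_piFinset_apply_le (fun i : Fin m => slab n W i) h _
    _ ≤ _ := uniformProb_product_fst_le _ _ (fun x => ¬ IsFarFromSlabEdges W s h x)
    _ ≤ _ := uniformProb_not_isFarFromSlabEdges_le _ hs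

lemma uniformProb_slabSpace_pair_le {n m W s : ℕ} (hW : 0 < W) (hs : 0 < s) (hnW : n = m * W)
    {h k : Fin m} (hkh : k ≠ h) :
    uniformProb (slabSpace n m W) (fun q => IsFarFromSlabEdges W s h (q h).1 ∧
        ((|((q h).1 : ℤ) - (q k).1| * |((q h).2 : ℤ) - (q k).2| : ℤ) : ℝ)
          ≤ (n : ℝ) ^ 2 / (m * s ^ 2))
      ≤ 2 / ((|((k : ℕ) : ℝ) - ((h : ℕ) : ℝ)| - 1) * s ^ 2 + s) + 1 / n := by
  have hm : 0 < m := h.pos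
  have hA : (0 : ℝ) ≤ (n : ℝ) ^ 2 / (m * s ^ 2) := by positivity
  refine (uniformProb_piFinset_apply₂_le (fun i : Fin m => slab n W i) hkh.symm
    (fun a b => IsFarFromSlabEdges W s h a.1 ∧
      ((|(a.1 : ℤ) - b.1| * |(a.2 : ℤ) - b.2| : ℤ) : ℝ) ≤ (n : ℝ) ^ 2 / (m * s ^ 2))).trans
    ((uniformProb_slab_pair_le hW hs (Fin.val_ne_of_ne hkh.symm) hA).trans_eq ?_)
  rw [hnW]
  push_cast
  field_simp

lemma sum_univ_erase_one_div_le {m W : ℕ} (h : Fin m) :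
    ∑ _k ∈ univ.erase h, (1 / (m * W : ℕ) : ℝ) ≤ 1 / W := by
  rw [sum_const, card_erase_of_mem (mem_univ h), card_univ, Fintype.card_fin, nsmul_eq_mul,
    Nat.cast_mul]
  calc ((m - 1 : ℕ) : ℝ) * (1 / (m * W)) ≤ m * (1 / (m * W)) := by
        gcongr; exact_mod_cast Nat.sub_le m 1
    _ = 1 / W := by field_simp [h.pos.ne']

open Classical in
theorem stmt10_general (n m s : ℕ) (hn : 0 < n) (hs : 0 < s) (hdvd : m ∣ n)
    (W : ℕ) (hW : W = n / m) (A : ℝ) (hA : A = (n : ℝ)^2 / (m * s^2)) (h : Fin m) :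
    (((slabSpace n m W).filter (fun q => ¬ wellSep A q h)).card : ℝ) /
        ((slabSpace n m W).card : ℝ) ≤
      2 / s + 3 / W +
        ∑ k ∈ Finset.univ.erase h, 2 / ((|((k : ℕ) : ℝ) - ((h : ℕ) : ℝ)| - 1) * s^2 + s) := by
  have hnW : n = m * W := by rw [hW, Nat.mul_div_cancel' hdvd]
  have hWpos : 0 < W := Nat.pos_of_ne_zero fun hW0 => by simp [hW0] at hnW; omega
  have hsum : ∑ _k ∈ univ.erase h, (1 / n : ℝ) ≤ 1 / W := hnW ▸ sum_univ_erase_one_div_le h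
  have hW3 : 1 / (W : ℝ) ≤ 3 / W := by gcongr; norm_num
  subst hA
  rw [← uniformProb_eq]
  calc _ ≤ uniformProb (slabSpace n m W) (fun q => ¬ IsFarFromSlabEdges W s h (q h).1 ∨
          ∃ k ∈ univ.erase h, IsFarFromSlabEdges W s h (q h).1 ∧
            ((|((q h).1 : ℤ) - (q k).1| * |((q h).2 : ℤ) - (q k).2| : ℤ) : ℝ)
              ≤ (n : ℝ) ^ 2 / (m * s ^ 2)) := by
        refine uniformProb_mono fun q _ hq => ?_
        simp only [wellSep, not_forall, not_lt, exists_prop] at hq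
        obtain ⟨k, hk, hkA⟩ := hq
        by_cases hfar : IsFarFromSlabEdges W s h (q h).1
        · exact Or.inr ⟨k, mem_erase.2 ⟨hk, mem_univ k⟩, hfar, hkA⟩
        · exact Or.inl hfar
    _ ≤ 2 / s + ∑ k ∈ univ.erase h,
          (2 / ((|((k : ℕ) : ℝ) - ((h : ℕ) : ℝ)| - 1) * s ^ 2 + s) + 1 / n) :=
        (uniformProb_or_le _ _ _).trans <| add_le_add
          (uniformProb_slabSpace_not_isFarFromSlabEdges_le hs h)
          ((uniformProb_exists_le _ _ _).trans <| sum_le_sum fun k hk =>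
            uniformProb_slabSpace_pair_le hWpos hs hnW (ne_of_mem_erase hk))
    _ ≤ _ := by
      rw [sum_add_distrib]
      linarith

open Classical in
theorem stmt10 (n m s : ℕ) (hn : 0 < n) (hm : 0 < m) (hs : 0 < s) (hdvd : m ∣ n)
    (W : ℕ) (hW : W = n / m) (A : ℝ) (hA : A = (n : ℝ)^2 / (m * s^2)) (h : Fin m) :
    (((slabSpace n m W).filter (fun q => ¬ wellSep A q h)).card : ℝ) /
        ((slabSpace n m W).card : ℝ) ≤
      2 / s + 3 / W +
        ∑ k ∈ Finset.univ.erase h, 2 / ((|((k : ℕ) : ℝ) - ((h : ℕ) : ℝ)| - 1) * s^2 + s) :=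
  stmt10_general n m s hn hs hdvd W hW A hA h
end

section
/- Let n, m, s be positive integers with m dividing n, set W = n/m and A = n²/(m·s²), and let q₀, …, q_{m−1} be independent random points with q_h uniformly distributed on {h·W, …, (h+1)·W − 1} × {0, …, n−1}. Suppose s ≥ 144, W ≥ 72, and s² ≥ 96·(1 + ln m). Then with probability at least 3/4, at least m/2 of the points q₀, …, q_{m−1} are well-separated. -/
/-!
Fix `h` and condition on `q k` for one `k ≠ h`. In a column of slab `h` at horizontal distance
`a ≥ 1` from `q k`, at most `min n (2A/a) + 1` points span with `q k` a rectangle of area `≤ A`.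
The slab at gap `d = |h - k|` realises the distances `(d-1)W+1, …, dW`, and each gap occurs for at
most two `k`, so the probability that `q h` is not well-separated is at most
`2 (n + ∑_{j ≤ n} min n (2A/j)) / (W n)`. Splitting the harmonic sum at `T ≈ W / s²` bounds this
by `1/8`, and Markov's inequality for the number of points that are not well-separated finishes.
-/

open Finset

theorem mul_card_filter_le_of_card_filter_le {α ι : Type*} [Fintype ι] (Ω : Finset α)
    (E : ι → α → Prop) [∀ i, DecidablePred (E i)] {p t : ℝ}
    (hE : ∀ i, (#{ω ∈ Ω | E i ω} : ℝ) ≤ p * #Ω) :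
    t * #{ω ∈ Ω | t ≤ #{i | E i ω}} ≤ Fintype.card ι * p * #Ω := by
  calc t * #{ω ∈ Ω | t ≤ #{i | E i ω}} = ∑ ω ∈ Ω with t ≤ #{i | E i ω}, t := by
        rw [sum_const, nsmul_eq_mul, mul_comm]
    _ ≤ ∑ ω ∈ Ω with t ≤ #{i | E i ω}, (#{i | E i ω} : ℝ) :=
        sum_le_sum fun ω hω => (mem_filter.1 hω).2
    _ ≤ ∑ ω ∈ Ω, (#{i | E i ω} : ℝ) :=
        sum_le_sum_of_subset_of_nonneg (filter_subset _ _) fun _ _ _ => by positivity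
    _ = ∑ i, (#{ω ∈ Ω | E i ω} : ℝ) := by
        simp_rw [natCast_card_filter]
        exact sum_comm
    _ ≤ ∑ _i : ι, p * #Ω := sum_le_sum fun i _ => hE i
    _ = Fintype.card ι * p * #Ω := by
        rw [sum_const, card_univ, nsmul_eq_mul, mul_assoc]

theorem one_sub_two_mul_card_le_card_filter_half_le {α ι : Type*} [Fintype ι] [Nonempty ι]
    (Ω : Finset α) (G : ι → α → Prop) [∀ i, DecidablePred (G i)] {p : ℝ}
    (hG : ∀ i, (#{ω ∈ Ω | ¬ G i ω} : ℝ) ≤ p * #Ω) :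
    (1 - 2 * p) * #Ω ≤ #{ω ∈ Ω | (Fintype.card ι : ℝ) / 2 ≤ #{i | G i ω}} := by
  set c : ℝ := (Fintype.card ι : ℝ)
  have hc : 0 < c := by simp [c, Fintype.card_pos]
  have hsplit (ω : α) : (#{i | G i ω} : ℝ) + #{i | ¬ G i ω} = c := by
    rw [← Nat.cast_add, card_filter_add_card_filter_not, card_univ]
  have hsub : {ω ∈ Ω | ¬ c / 2 ≤ #{i | G i ω}} ⊆ {ω ∈ Ω | c / 2 ≤ #{i | ¬ G i ω}} :=
    monotone_filter_right Ω fun ω _ hω => by linarith [hsplit ω, not_le.1 hω]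
  have hmarkov := mul_card_filter_le_of_card_filter_le Ω (fun i ω => ¬ G i ω) hG (t := c / 2)
  have htotal := card_filter_add_card_filter_not (s := Ω) fun ω => c / 2 ≤ #{i | G i ω}
  have hcard : (#{ω ∈ Ω | ¬ c / 2 ≤ #{i | G i ω}} : ℝ) ≤ #{ω ∈ Ω | c / 2 ≤ #{i | ¬ G i ω}} := by
    exact_mod_cast card_le_card hsub
  have : (#{ω ∈ Ω | c / 2 ≤ #{i | G i ω}} : ℝ) + #{ω ∈ Ω | ¬ c / 2 ≤ #{i | G i ω}} = #Ω := by
    exact_mod_cast htotal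
  nlinarith

theorem card_filter_piFinset_le {ι α : Type*} [Fintype ι] [DecidableEq ι] [DecidableEq α]
    (t : ι → Finset α) {c : ℕ} (hc : ∀ i, #(t i) = c) {h k : ι} (hkh : k ≠ h)
    (Q : α → α → Prop) [DecidableRel Q] {β : ℝ}
    (hβ : ∀ b ∈ t k, (#{a ∈ t h | Q a b} : ℝ) ≤ β) :
    (#{q ∈ Fintype.piFinset t | Q (q h) (q k)} : ℝ) ≤ β * c ^ (Fintype.card ι - 1) := by
  set S := {q ∈ Fintype.piFinset t | Q (q h) (q k)}
  set R := Fintype.piFinset fun i : {i // i ≠ h} => t i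
  set restrict : (ι → α) → {i // i ≠ h} → α := fun q i => q i
  have hmaps : ∀ q ∈ S, restrict q ∈ R := fun q hq =>
    Fintype.mem_piFinset.2 fun i => Fintype.mem_piFinset.1 (mem_filter.1 hq).1 i
  -- Within a fibre of `restrict`, a point of `S` is determined by its `h`-th coordinate.
  have hfiber (r : {i // i ≠ h} → α) (hr : r ∈ R) :
      (#{q ∈ S | restrict q = r} : ℝ) ≤ β := by
    refine le_trans ?_ (hβ _ (Fintype.mem_piFinset.1 hr ⟨k, hkh⟩))
    refine Nat.cast_le.2 (card_le_card_of_injOn (· h) (fun q hq => ?_) fun q hq q' hq' hqq' => ?_)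
    · simp only [S, coe_filter, mem_filter, Set.mem_ofPred_eq, Fintype.mem_piFinset] at hq
      obtain ⟨⟨hqt, hQ⟩, rfl⟩ := hq
      simpa [hqt h] using hQ
    · simp only [S, coe_filter, Set.mem_ofPred_eq] at hq hq'
      funext i
      by_cases hi : i = h
      · subst hi; exact hqq'
      · exact congrFun (hq.2.trans hq'.2.symm) ⟨i, hi⟩
  have hR : #R = c ^ (Fintype.card ι - 1) := by
    simp [R, hc, Fintype.card_subtype_compl]
  calc (#S : ℝ) = ∑ r ∈ R, (#{q ∈ S | restrict q = r} : ℝ) := by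
        exact_mod_cast card_eq_sum_card_fiberwise hmaps
    _ ≤ ∑ _r ∈ R, β := sum_le_sum hfiber
    _ = β * c ^ (Fintype.card ι - 1) := by rw [sum_const, nsmul_eq_mul, hR, mul_comm]; norm_cast

theorem sum_comp_le_sum_of_injOn {ι κ : Type*} [DecidableEq κ] {s : Finset ι} {t : Finset κ}
    {φ : ι → κ} (hφ : Set.InjOn φ s) (hst : ∀ i ∈ s, φ i ∈ t) {F : κ → ℝ}
    (hF : ∀ j ∈ t, 0 ≤ F j) : ∑ i ∈ s, F (φ i) ≤ ∑ j ∈ t, F j := by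
  rw [← sum_image hφ]
  exact sum_le_sum_of_subset_of_nonneg (image_subset_iff.2 hst) fun j hj _ => hF j hj

theorem sum_erase_dist_le {m : ℕ} (h : Fin m) {F : ℕ → ℝ} (hF : ∀ e, 0 ≤ F e) :
    ∑ k ∈ univ.erase h, F (Nat.dist h k - 1) ≤ 2 * ∑ e ∈ range (m - 1), F e := by
  have hdist (k : Fin m) : Nat.dist h k = h - k + (k - h) := rfl
  have hm := h.isLt
  rw [← sum_filter_add_sum_filter_not _ fun k => k < h, two_mul]
  gcongr <;> refine sum_comp_le_sum_of_injOn ?_ ?_ fun e _ => hF e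
  all_goals
    simp only [Set.InjOn, coe_filter, mem_filter, mem_erase, mem_univ, mem_range, ne_eq,
      Set.mem_ofPred_eq, Fin.ext_iff, Fin.lt_def, hdist]
  · intro k hk k' hk' hkk'; omega
  · intro k hk; omega
  · intro k hk k' hk' hkk'; omega
  · intro k hk; have := k.isLt; omega

theorem sum_range_sum_range_mul_add {M : Type*} [AddCommMonoid M] (f : ℕ → M) (D W : ℕ) :
    ∑ e ∈ range D, ∑ i ∈ range W, f (e * W + i) = ∑ j ∈ range (D * W), f j := by
  induction D with
  | zero => simp
  | succ D ih => rw [sum_range_succ, ih, add_one_mul, sum_range_add]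

theorem card_filter_abs_sub_le (n : ℕ) (y₀ : ℤ) {r : ℝ} (hr : 0 ≤ r) :
    (#{y ∈ range n | ((|(y : ℕ) - y₀| : ℤ) : ℝ) ≤ r} : ℝ) ≤ 2 * r + 1 := by
  have hsub : #{y ∈ range n | ((|(y : ℕ) - y₀| : ℤ) : ℝ) ≤ r} ≤ #(Icc (y₀ - ⌊r⌋) (y₀ + ⌊r⌋)) := by
    refine card_le_card_of_injOn (fun y : ℕ => (y : ℤ)) (fun y hy => ?_) Nat.cast_injective.injOn
    have hy : |(y : ℤ) - y₀| ≤ ⌊r⌋ := Int.le_floor.2 (by exact_mod_cast (mem_filter.1 hy).2)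
    simp only [coe_Icc, Set.mem_Icc]
    constructor <;> linarith [abs_le.1 hy]
  have hfloor : (0 : ℤ) ≤ ⌊r⌋ := Int.floor_nonneg.2 hr
  rw [Int.card_Icc, show y₀ + ⌊r⌋ + 1 - (y₀ - ⌊r⌋) = 2 * ⌊r⌋ + 1 by ring] at hsub
  calc (#{y ∈ range n | ((|(y : ℕ) - y₀| : ℤ) : ℝ) ≤ r} : ℝ) ≤ ((2 * ⌊r⌋ + 1).toNat : ℤ) := by
        exact_mod_cast hsub
    _ = 2 * (⌊r⌋ : ℝ) + 1 := by rw [Int.toNat_of_nonneg (by omega)]; push_cast; ring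
    _ ≤ 2 * r + 1 := by linarith [Int.floor_le r]

def rectArea (p q : ℕ × ℕ) : ℤ := |(p.1 : ℤ) - q.1| * |(p.2 : ℤ) - q.2|

noncomputable def colBound (n : ℕ) (A : ℝ) (j : ℕ) : ℝ := min n (2 * A / j)

theorem colBound_nonneg {n : ℕ} {A : ℝ} (hA : 0 ≤ A) (j : ℕ) : 0 ≤ colBound n A j :=
  le_min (Nat.cast_nonneg n) (by positivity)

theorem colBound_anti {n : ℕ} {A : ℝ} (hA : 0 ≤ A) {i j : ℕ} (hi : 0 < i) (hij : i ≤ j) :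
    colBound n A j ≤ colBound n A i :=
  min_le_min le_rfl (div_le_div_of_nonneg_left (by positivity) (by exact_mod_cast hi)
    (by exact_mod_cast hij))

theorem card_filter_rectArea_le {n : ℕ} {A : ℝ} (hA : 0 ≤ A) {x x₀ : ℕ} (hx : x ≠ x₀) (y₀ : ℕ) :
    (#{y ∈ range n | (rectArea (x, y) (x₀, y₀) : ℝ) ≤ A} : ℝ)
      ≤ colBound n A ((x : ℤ) - x₀).natAbs + 1 := by
  set a := ((x : ℤ) - x₀).natAbs
  have ha : (0 : ℝ) < a :=
    Nat.cast_pos.2 (Int.natAbs_pos.2 (sub_ne_zero.2 (by exact_mod_cast hx)))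
  have hsub : {y ∈ range n | (rectArea (x, y) (x₀, y₀) : ℝ) ≤ A}
      ⊆ {y ∈ range n | ((|(y : ℕ) - y₀| : ℤ) : ℝ) ≤ A / a} := by
    refine monotone_filter_right _ fun y _ hy => ?_
    rw [le_div_iff₀ ha, mul_comm]
    simpa [rectArea, a, Nat.cast_natAbs] using hy
  rw [colBound, ← min_add_add_right]
  refine le_min ?_ ?_
  · have := card_filter_le (range n) fun y => (rectArea (x, y) (x₀, y₀) : ℝ) ≤ A
    rw [card_range] at this
    linarith [(Nat.cast_le (α := ℝ)).2 this]
  · calc _ ≤ (#{y ∈ range n | ((|(y : ℕ) - y₀| : ℤ) : ℝ) ≤ A / a} : ℝ) := by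
          exact_mod_cast card_le_card hsub
      _ ≤ 2 * (A / a) + 1 := card_filter_abs_sub_le n y₀ (by positivity)
      _ = 2 * A / a + 1 := by ring

theorem sum_range_colBound_le {n : ℕ} {A : ℝ} (hA : 0 ≤ A) {T N : ℕ} (hT : 0 < T) (hTN : T ≤ N) :
    ∑ j ∈ range N, colBound n A (j + 1) ≤ T * n + 2 * A * Real.log (N / T) := by
  rw [← sum_range_add_sum_Ico _ hTN]
  have hhead : ∑ j ∈ range T, colBound n A (j + 1) ≤ T * n := by
    calc _ ≤ ∑ _j ∈ range T, (n : ℝ) := sum_le_sum fun j _ => min_le_left _ _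
      _ = T * n := by rw [sum_const, card_range, nsmul_eq_mul]
  have htail : ∑ j ∈ Ico T N, colBound n A (j + 1) ≤ 2 * A * Real.log (N / T) := by
    have hTR : (0 : ℝ) < T := by exact_mod_cast hT
    calc ∑ j ∈ Ico T N, colBound n A (j + 1)
        ≤ ∑ j ∈ Ico T N, 2 * A * ((j + 1 : ℕ) : ℝ)⁻¹ :=
          sum_le_sum fun j _ => (min_le_right _ _).trans_eq (div_eq_mul_inv _ _)
      _ = 2 * A * ∑ j ∈ Ico T N, ((j + 1 : ℕ) : ℝ)⁻¹ := by rw [mul_sum]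
      _ ≤ 2 * A * ∫ x in (T : ℝ)..N, x⁻¹ := by
          gcongr
          exact AntitoneOn.sum_le_integral_Ico hTN (inv_antitoneOn_Icc_right hTR)
      _ = 2 * A * Real.log (N / T) := by
          rw [integral_inv_of_pos hTR (hTR.trans_le (by exact_mod_cast hTN))]
  linarith

noncomputable def slabBound (n : ℕ) (A : ℝ) (W d : ℕ) : ℝ :=
  W + ∑ i ∈ range W, colBound n A (d * W + i + 1)

theorem slabBound_nonneg {n : ℕ} {A : ℝ} (hA : 0 ≤ A) (W d : ℕ) : 0 ≤ slabBound n A W d :=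
  add_nonneg (Nat.cast_nonneg W) (sum_nonneg fun _ _ => colBound_nonneg hA _)

theorem sum_Ico_colBound_le {n : ℕ} {A : ℝ} (hA : 0 ≤ A) {W h k x₀ : ℕ} (hhk : h ≠ k)
    (hx₀ : x₀ ∈ Ico (k * W) ((k + 1) * W)) :
    ∑ x ∈ Ico (h * W) ((h + 1) * W), colBound n A ((x : ℤ) - x₀).natAbs
      ≤ ∑ i ∈ range W, colBound n A ((Nat.dist h k - 1) * W + i + 1) := by
  rw [mem_Ico] at hx₀
  have hd : Nat.dist h k = h - k + (k - h) := rfl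
  have hh := add_one_mul h W
  have hk := add_one_mul k W
  rw [sum_Ico_eq_sum_range, hh, Nat.add_sub_cancel_left]
  rcases lt_or_gt_of_ne hhk with hlt | hgt
  -- For `h < k` the distance to `x₀` decreases along slab `h`, so the slab is read backwards.
  · have key : (Nat.dist h k - 1) * W + (h + 1) * W = k * W := by
      rw [← add_mul, show Nat.dist h k - 1 + (h + 1) = k by omega]
    rw [← sum_range_reflect]
    refine sum_le_sum fun i hi => colBound_anti hA (by omega) ?_
    rw [mem_range] at hi
    omega
  · have key : (Nat.dist h k - 1) * W + (k + 1) * W = h * W := by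
      rw [← add_mul, show Nat.dist h k - 1 + (k + 1) = h by omega]
    refine sum_le_sum fun i hi => colBound_anti hA (by omega) ?_
    omega

theorem card_filter_slab_rectArea_le {n : ℕ} {A : ℝ} (hA : 0 ≤ A) {W h k : ℕ} (hhk : h ≠ k)
    {b : ℕ × ℕ} (hb : b.1 ∈ Ico (k * W) ((k + 1) * W)) :
    (#{p ∈ Ico (h * W) ((h + 1) * W) ×ˢ range n | (rectArea p b : ℝ) ≤ A} : ℝ)
      ≤ slabBound n A W (Nat.dist h k - 1) := by
  have hne : ∀ x ∈ Ico (h * W) ((h + 1) * W), x ≠ b.1 := by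
    intro x hx rfl
    rw [mem_Ico] at hx hb
    rcases lt_or_gt_of_ne hhk with hlt | hgt
    · have := Nat.mul_le_mul_right W (show h + 1 ≤ k from hlt); omega
    · have := Nat.mul_le_mul_right W (show k + 1 ≤ h from hgt); omega
  calc (#{p ∈ Ico (h * W) ((h + 1) * W) ×ˢ range n | (rectArea p b : ℝ) ≤ A} : ℝ)
      = ∑ x ∈ Ico (h * W) ((h + 1) * W), (#{y ∈ range n | (rectArea (x, y) b : ℝ) ≤ A} : ℝ) := by
        rw [card_filter, sum_product]; push_cast; simp_rw [natCast_card_filter]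
    _ ≤ ∑ x ∈ Ico (h * W) ((h + 1) * W), (colBound n A ((x : ℤ) - b.1).natAbs + 1) :=
        sum_le_sum fun x hx => card_filter_rectArea_le hA (hne x hx) b.2
    _ = W + ∑ x ∈ Ico (h * W) ((h + 1) * W), colBound n A ((x : ℤ) - b.1).natAbs := by
        rw [sum_add_distrib, sum_const, Nat.card_Ico, add_one_mul, Nat.add_sub_cancel_left,
          nsmul_one, add_comm]
    _ ≤ slabBound n A W (Nat.dist h k - 1) := by
        rw [slabBound]; gcongr; exact sum_Ico_colBound_le hA hhk hb

theorem sum_erase_slabBound_le_two_mul {n : ℕ} {A : ℝ} (hA : 0 ≤ A) {m W : ℕ} (h : Fin m) :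
    ∑ k ∈ univ.erase h, slabBound n A W (Nat.dist h k - 1)
      ≤ 2 * (m * W + ∑ j ∈ range (m * W), colBound n A (j + 1)) := by
  calc ∑ k ∈ univ.erase h, slabBound n A W (Nat.dist h k - 1)
      ≤ 2 * ∑ e ∈ range (m - 1), slabBound n A W e :=
        sum_erase_dist_le h (slabBound_nonneg hA W)
    _ = 2 * ((m - 1 : ℕ) * W + ∑ j ∈ range ((m - 1) * W), colBound n A (j + 1)) := by
        simp only [slabBound, sum_add_distrib, sum_const, card_range, nsmul_eq_mul,
          sum_range_sum_range_mul_add fun j => colBound n A (j + 1)]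
    _ ≤ 2 * (m * W + ∑ j ∈ range (m * W), colBound n A (j + 1)) := by
        gcongr 2 * (?_ * _ + ?_)
        · exact_mod_cast m.sub_le 1
        · exact sum_le_sum_of_subset_of_nonneg
            (range_subset_range.2 (Nat.mul_le_mul_right W (m.sub_le 1)))
            fun j _ _ => colBound_nonneg hA _

theorem card_slabSpace (n m W : ℕ) : #(slabSpace n m W) = (W * n) ^ m := by
  simp [slabSpace, add_one_mul]

open Classical in
theorem card_filter_not_wellSep_le {n m W : ℕ} {A p : ℝ} (hA : 0 ≤ A) (h : Fin m)
    (hsum : ∑ k ∈ univ.erase h, slabBound n A W (Nat.dist h k - 1) ≤ p * (W * n : ℕ)) :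
    (#{q ∈ slabSpace n m W | ¬ wellSep A q h} : ℝ) ≤ p * #(slabSpace n m W) := by
  set bad : Fin m → Finset (Fin m → ℕ × ℕ) :=
    fun k => {q ∈ slabSpace n m W | (rectArea (q h) (q k) : ℝ) ≤ A}
  have hsub : {q ∈ slabSpace n m W | ¬ wellSep A q h} ⊆ (univ.erase h).biUnion bad := by
    intro q hq
    obtain ⟨hq, hsep⟩ := mem_filter.1 hq
    obtain ⟨k, hkh, hk⟩ := not_forall₂.1 hsep
    exact mem_biUnion.2 ⟨k, mem_erase.2 ⟨hkh, mem_univ k⟩, mem_filter.2 ⟨hq, not_lt.1 hk⟩⟩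
  have hslab (i : Fin m) : #(Ico ((i : ℕ) * W) (((i : ℕ) + 1) * W) ×ˢ range n) = W * n := by
    simp [add_one_mul]
  calc (#{q ∈ slabSpace n m W | ¬ wellSep A q h} : ℝ) ≤ ∑ k ∈ univ.erase h, (#(bad k) : ℝ) := by
        exact_mod_cast (card_le_card hsub).trans card_biUnion_le
    _ ≤ ∑ k ∈ univ.erase h, slabBound n A W (Nat.dist h k - 1) * ((W * n : ℕ) : ℝ) ^ (m - 1) := by
        refine sum_le_sum fun k hk => ?_
        have hkh := ne_of_mem_erase hk
        have := card_filter_piFinset_le _ hslab hkh (fun a b => (rectArea a b : ℝ) ≤ A)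
          fun b hb => card_filter_slab_rectArea_le hA (Fin.val_ne_of_ne hkh.symm)
            (mem_product.1 hb).1
        rwa [Fintype.card_fin] at this
    _ ≤ p * (W * n : ℕ) * ((W * n : ℕ) : ℝ) ^ (m - 1) := by rw [← sum_mul]; gcongr
    _ = p * #(slabSpace n m W) := by
        rw [card_slabSpace, Nat.cast_pow, mul_assoc, mul_pow_sub_one h.pos.ne']

theorem separation_budget_le {n m W s T A : ℝ} (hn : n = m * W) (hA : A = W * n / s ^ 2)
    (hs : 144 ≤ s) (hW : 72 ≤ W) (hm : 1 ≤ m) (hslb : 96 * (1 + Real.log m) ≤ s ^ 2)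
    (hT : 0 < T) (hTW : T ≤ W / s ^ 2 + 1) (hWT : W ≤ T * s ^ 2) :
    2 * (n + (T * n + 2 * A * Real.log (n / T))) ≤ W * n / 8 := by
  have hs0 : 0 < s := by linarith
  have hn0 : 0 < n := by rw [hn]; positivity
  have hA0 : 0 ≤ A := by rw [hA]; positivity
  have hlog_ratio : Real.log (n / T) ≤ Real.log m + 2 * Real.log s := by
    have : n / T ≤ m * s ^ 2 := by
      rw [div_le_iff₀ hT, hn, mul_assoc, mul_comm (s ^ 2)]
      gcongr
    calc Real.log (n / T) ≤ Real.log (m * s ^ 2) := Real.log_le_log (by positivity) this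
      _ = Real.log m + 2 * Real.log s := by
          rw [Real.log_mul (by positivity) (by positivity), Real.log_pow]; push_cast; ring
  -- `log s ≤ 2 √s` and `s ^ 2 ≥ 1728 √s` make `A log s` a small fraction of `W n`.
  have hsqrt : 12 ≤ √s := Real.le_sqrt_of_sq_le (by linarith)
  have hlogs : Real.log s ≤ 2 * √s := by
    have := Real.log_le_sub_one_of_pos (Real.sqrt_pos.2 hs0)
    rw [Real.log_sqrt hs0.le] at this
    linarith
  have hs_sq : 1728 * √s ≤ s ^ 2 := by
    have := Real.mul_self_sqrt hs0.le
    nlinarith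
  have hn_small : n ≤ W * n / 72 := by nlinarith
  have hhead : T * n ≤ A + n := by
    calc T * n ≤ (W / s ^ 2 + 1) * n := by gcongr
      _ = A + n := by rw [hA]; ring
  have hA_log_m : A * Real.log m ≤ W * n / 96 - A := by
    have : A * (1 + Real.log m) ≤ A * (s ^ 2 / 96) := by gcongr; linarith
    rw [hA] at this ⊢
    field_simp at this ⊢
    linarith
  have hA_log_s : A * Real.log s ≤ W * n / 864 := by
    calc A * Real.log s ≤ A * (2 * √s) := by gcongr
      _ = 2 * (W * n) * √s / s ^ 2 := by rw [hA]; ring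
      _ ≤ 2 * (W * n) * √s / (1728 * √s) := by gcongr
      _ = W * n / 864 := by field_simp; ring
  have hA_log_ratio : 2 * A * Real.log (n / T) ≤ 2 * A * (Real.log m + 2 * Real.log s) := by gcongr
  linarith

theorem sum_erase_slabBound_le_div_eight {n m W s : ℕ} {A : ℝ} (hn : n = m * W)
    (hA : A = W * n / s ^ 2) (hs : 144 ≤ s) (hW : 72 ≤ W)
    (hslb : 96 * (1 + Real.log m) ≤ (s : ℝ) ^ 2) (h : Fin m) :
    ∑ k ∈ univ.erase h, slabBound n A W (Nat.dist h k - 1) ≤ 1 / 8 * (W * n : ℕ) := by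
  have hm : 0 < m := h.pos
  have hs2 : 0 < s ^ 2 := by positivity
  have hA0 : 0 ≤ A := by rw [hA]; positivity
  have hnR : (n : ℝ) = m * W := by exact_mod_cast hn
  -- The harmonic sum is split at `T`: `T ≤ W / s² + 1` keeps the head `T n` small and
  -- `W ≤ T s²` keeps the logarithm of the tail small.
  set T := W / s ^ 2 + 1 with hTdef
  have hT : 0 < T := Nat.succ_pos _
  have hTn : T ≤ n :=
    calc T ≤ W := Nat.div_lt_self (by omega) (by nlinarith)
      _ ≤ n := hn ▸ Nat.le_mul_of_pos_left W hm
  have hTW : (T : ℝ) ≤ W / s ^ 2 + 1 := by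
    have := Nat.cast_div_le (α := ℝ) (m := W) (n := s ^ 2)
    rw [hTdef]
    push_cast at this ⊢
    linarith
  have hWT : (W : ℝ) ≤ T * s ^ 2 := by
    have := Nat.lt_mul_div_succ W hs2
    rw [mul_comm] at this
    exact_mod_cast this.le
  calc _ ≤ 2 * (m * W + ∑ j ∈ range (m * W), colBound n A (j + 1)) :=
        sum_erase_slabBound_le_two_mul hA0 h
    _ ≤ 2 * (n + (T * n + 2 * A * Real.log (n / T))) := by
        rw [← hnR, ← hn]
        gcongr
        exact sum_range_colBound_le hA0 hT hTn
    _ ≤ W * n / 8 :=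
        separation_budget_le hnR hA (by exact_mod_cast hs) (by exact_mod_cast hW)
          (by exact_mod_cast hm) hslb (by exact_mod_cast hT) hTW hWT
    _ = 1 / 8 * (W * n : ℕ) := by push_cast; ring

open Classical in
theorem stmt11_general (n m s : ℕ) (hdvd : m ∣ n)
    (W : ℕ) (hW : W = n / m) (A : ℝ) (hA : A = (n : ℝ)^2 / (m * s^2))
    (hs : 144 ≤ s) (hWlb : 72 ≤ W) (hslb : 96 * (1 + Real.log m) ≤ ((s : ℝ))^2) :
    (3 : ℝ) / 4 ≤
      (((slabSpace n m W).filter (fun q =>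
          (m : ℝ) / 2 ≤ ((Finset.univ.filter (fun h : Fin m => wellSep A q h)).card : ℝ))).card : ℝ) /
        ((slabSpace n m W).card : ℝ) := by
  have hm : 0 < m := Nat.pos_of_ne_zero fun hm0 => by simp [hm0] at hW; omega
  have hn : n = m * W := by rw [hW, Nat.mul_div_cancel' hdvd]
  have hA' : A = W * n / s ^ 2 := by
    rw [hA, show (n : ℝ) = m * W by exact_mod_cast hn]
    field_simp
  have hA0 : 0 ≤ A := by rw [hA']; positivity
  have hbad (h : Fin m) : (#{q ∈ slabSpace n m W | ¬ wellSep A q h} : ℝ)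
      ≤ 1 / 8 * #(slabSpace n m W) :=
    card_filter_not_wellSep_le hA0 h (sum_erase_slabBound_le_div_eight hn hA' hs hWlb hslb h)
  have : Nonempty (Fin m) := ⟨⟨0, hm⟩⟩
  have hgood := one_sub_two_mul_card_le_card_filter_half_le _ (fun h q => wellSep A q h) hbad
  rw [Fintype.card_fin] at hgood
  have hΩ : (0 : ℝ) < #(slabSpace n m W) := by
    rw [card_slabSpace]
    have hW0 : 0 < W := by omega
    exact_mod_cast pow_pos (Nat.mul_pos hW0 (hn ▸ Nat.mul_pos hm hW0)) m
  rw [le_div_iff₀ hΩ]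
  linarith

open Classical in
theorem stmt11 (n m s : ℕ) (hn : 0 < n) (hm : 0 < m) (hdvd : m ∣ n)
    (W : ℕ) (hW : W = n / m) (A : ℝ) (hA : A = (n : ℝ)^2 / (m * s^2))
    (hs : 144 ≤ s) (hWlb : 72 ≤ W) (hslb : 96 * (1 + Real.log m) ≤ ((s : ℝ))^2) :
    (3 : ℝ) / 4 ≤
      (((slabSpace n m W).filter (fun q =>
          (m : ℝ) / 2 ≤ ((Finset.univ.filter (fun h : Fin m => wellSep A q h)).card : ℝ))).card : ℝ) /
        ((slabSpace n m W).card : ℝ) :=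
  stmt11_general n m s hdvd W hW A hA hs hWlb hslb
end
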